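/- arXiv:2007.00028 — 8 statements merged into one kernel-verified Lean document; each statement's English description precedes it below -/
import Mathlib

section
/- Let L̂ : ℝ^d → ℝ be a convex differentiable function and let w(·) be the gradient flow of L̂ started at the origin. Fix T ≥ 0, and let w* be any vector with L̂(w*) ≤ L̂(w(T)). Then sup_{t ∈ [0,T]} ‖w(t)‖ ≤ 2‖w*‖. -/
/-!
Along the flow `L ∘ w` is nonincreasing, so `L (w t) ≥ L (w T) ≥ L w*` for `t ≤ T`. By the
first-order characterisation of convexity,
`d/dt ‖w t - w*‖² = 2 ⟪∇L (w t), w* - w t⟫ ≤ 2 (L w* - L (w t)) ≤ 0`,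
so `‖w t - w*‖ ≤ ‖w 0 - w*‖ = ‖w*‖` on `[0, T]`, and the triangle inequality gives `‖w t‖ ≤ 2‖w*‖`.
-/

open Set
open scoped RealInnerProductSpace Gradient

theorem ConvexOn.le_sub_of_hasFDerivAt {E : Type*} [NormedAddCommGroup E] [NormedSpace ℝ E]
    {s : Set E} {f : E → ℝ} {f' : E →L[ℝ] ℝ} {x y : E} (hf : ConvexOn ℝ s f)
    (hx : x ∈ s) (hy : y ∈ s) (hf' : HasFDerivAt f f' x) :
    f' (y - x) ≤ f y - f x := by
  let γ : ℝ →ᵃ[ℝ] E := AffineMap.lineMap x y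
  have hγ : HasDerivWithinAt (f ∘ γ) (f' (y - x)) (γ ⁻¹' s) 0 := by
    rw [← AffineMap.lineMap_apply_zero (k := ℝ) x y] at hf'
    exact hf'.comp_hasDerivWithinAt 0 AffineMap.hasDerivWithinAt_lineMap
  have hslope := (hf.comp_affineMap γ).le_slope_of_hasDerivWithinAt
    (by simpa [γ] using hx) (by simpa [γ] using hy) one_pos hγ
  simpa [γ, slope_def_field] using hslope

theorem antitoneOn_Icc_of_hasDerivAt_nonpos {f f' : ℝ → ℝ} {a b : ℝ}
    (hf : ∀ t ∈ Icc a b, HasDerivAt f (f' t) t) (hf' : ∀ t ∈ Ioo a b, f' t ≤ 0) :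
    AntitoneOn f (Icc a b) := by
  refine antitoneOn_of_hasDerivWithinAt_nonpos (f' := f') (convex_Icc a b)
    (fun t ht ↦ (hf t ht).continuousAt.continuousWithinAt) (fun t ht ↦ ?_) ?_
  · rw [interior_Icc] at ht ⊢
    exact (hf t (Ioo_subset_Icc_self ht)).hasDerivWithinAt
  · rwa [interior_Icc]

variable {E : Type*} [NormedAddCommGroup E] [InnerProductSpace ℝ E] [CompleteSpace E]

theorem ConvexOn.inner_gradient_le_sub {L : E → ℝ} {x y : E} (hL : ConvexOn ℝ univ L)
    (hx : DifferentiableAt ℝ L x) : ⟪∇ L x, y - x⟫ ≤ L y - L x := by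
  rw [inner_gradient_left]
  exact hL.le_sub_of_hasFDerivAt (mem_univ x) (mem_univ y) hx.hasFDerivAt

def IsGradientFlow (L : E → ℝ) (w : ℝ → E) : Prop :=
  ∀ t, 0 ≤ t → HasDerivAt w (-∇ L (w t)) t

namespace IsGradientFlow

variable {L : E → ℝ} {w : ℝ → E} {t T : ℝ}

theorem hasDerivAt_comp (hw : IsGradientFlow L w) (ht : 0 ≤ t)
    (hL : DifferentiableAt ℝ L (w t)) :
    HasDerivAt (L ∘ w) (-‖∇ L (w t)‖ ^ 2) t := by
  have h := hL.hasFDerivAt.comp_hasDerivAt t (hw t ht)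
  rwa [← inner_gradient_left, inner_neg_right, real_inner_self_eq_norm_sq] at h

theorem le_comp_of_mem_Icc (hw : IsGradientFlow L w) (hL : Differentiable ℝ L)
    (ht : t ∈ Icc 0 T) : L (w T) ≤ L (w t) :=
  antitoneOn_Icc_of_hasDerivAt_nonpos (fun _ hs ↦ hw.hasDerivAt_comp hs.1 (hL _))
    (fun _ _ ↦ neg_nonpos.mpr (sq_nonneg _)) ht (right_mem_Icc.mpr (ht.1.trans ht.2)) ht.2

theorem hasDerivAt_norm_sub_sq (hw : IsGradientFlow L w) (z : E) (ht : 0 ≤ t) :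
    HasDerivAt (fun s ↦ ‖w s - z‖ ^ 2) (2 * ⟪∇ L (w t), z - w t⟫) t := by
  have h := ((hw t ht).sub_const z).norm_sq
  rwa [inner_neg_right, ← inner_neg_left, neg_sub, real_inner_comm] at h

theorem dist_le_dist_initial (hw : IsGradientFlow L w) (hLconv : ConvexOn ℝ univ L)
    (hL : Differentiable ℝ L) {z : E} (hz : L z ≤ L (w T)) (ht : t ∈ Icc 0 T) :
    dist (w t) z ≤ dist (w 0) z := by
  have hanti : AntitoneOn (fun s ↦ ‖w s - z‖ ^ 2) (Icc 0 T) := by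
    refine antitoneOn_Icc_of_hasDerivAt_nonpos (fun s hs ↦ hw.hasDerivAt_norm_sub_sq z hs.1)
      fun s hs ↦ ?_
    have hconv := hLconv.inner_gradient_le_sub (y := z) (hL (w s))
    have hdecr := hw.le_comp_of_mem_Icc hL (Ioo_subset_Icc_self hs)
    linarith
  have hsq := hanti (left_mem_Icc.mpr (ht.1.trans ht.2)) ht ht.1
  rw [dist_eq_norm, dist_eq_norm]
  exact (sq_le_sq₀ (norm_nonneg _) (norm_nonneg _)).mp hsq

end IsGradientFlow

theorem stmt_1_general {d : ℕ}
    (L : EuclideanSpace ℝ (Fin d) → ℝ)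
    (hLconv : ConvexOn ℝ Set.univ L)
    (hLdiff : Differentiable ℝ L)
    (w : ℝ → EuclideanSpace ℝ (Fin d))
    (hw0 : w 0 = 0)
    (hflow : ∀ t : ℝ, 0 ≤ t → HasDerivAt w (-(gradient L (w t))) t)
    (T : ℝ)
    (ws : EuclideanSpace ℝ (Fin d))
    (hws : L ws ≤ L (w T)) :
    ∀ t ∈ Set.Icc (0 : ℝ) T, ‖w t‖ ≤ 2 * ‖ws‖ := by
  intro t ht
  have hdist := IsGradientFlow.dist_le_dist_initial hflow hLconv hLdiff hws ht
  rw [hw0, dist_zero_left] at hdist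
  calc ‖w t‖ = dist (w t) 0 := (dist_zero_right _).symm
    _ ≤ dist (w t) ws + dist ws 0 := dist_triangle _ _ _
    _ ≤ 2 * ‖ws‖ := by rw [dist_zero_right]; linarith

/-- Lemma 1 of the paper. Let `L` be a convex differentiable
function on `ℝ^d` and let `w` be the gradient flow of `L` started at the origin.
Fix `T ≥ 0` and let `w*` be any vector with `L w* ≤ L (w T)`. Then
`‖w t‖ ≤ 2‖w*‖` for all `t ∈ [0, T]`. -/
theorem stmt_1 {d : ℕ}
    (L : EuclideanSpace ℝ (Fin d) → ℝ)
    (hLconv : ConvexOn ℝ Set.univ L)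
    (hLdiff : Differentiable ℝ L)
    (w : ℝ → EuclideanSpace ℝ (Fin d))
    (hw0 : w 0 = 0)
    (hflow : ∀ t : ℝ, 0 ≤ t → HasDerivAt w (-(gradient L (w t))) t)
    (T : ℝ) (hT : 0 ≤ T)
    (ws : EuclideanSpace ℝ (Fin d))
    (hws : L ws ≤ L (w T)) :
    ∀ t ∈ Set.Icc (0 : ℝ) T, ‖w t‖ ≤ 2 * ‖ws‖ :=
  stmt_1_general L hLconv hLdiff w hw0 hflow T ws hws
end

section
/- Let x_1,…,x_m ∈ ℝ^d satisfy max_i ‖x_i‖ ≤ 1 and be separable with margin γ ∈ (0,1], let ℓ(z) = exp(−z) be the exponential loss, and let w(·) be the gradient flow of the empirical risk L̂ started at the origin. Then for every T > 0, L̂(w(T)) ≤ 1/(γ²T). -/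
open scoped RealInnerProductSpace

/-!
Along the flow, `d/dt L̂(w t) = -‖∇L̂(w t)‖²`. Pairing `-∇L̂(v) = (1/m) ∑ exp(-⟪xᵢ, v⟫) xᵢ` with
the unit margin direction `w₀` gives the Polyak–Łojasiewicz-type bound `γ L̂ ≤ ‖∇L̂‖`, so
`d/dt L̂ ≤ -γ² L̂²`, i.e. `1/L̂(w t)` grows at rate at least `γ²`. Hence `1/L̂(w T) ≥ 1/L̂(w 0) + γ² T > γ² T`.
-/

theorem inv_add_mul_sub_le_inv_of_hasDerivAt_le_neg_mul_sq {f f' : ℝ → ℝ} {a c : ℝ}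
    (hpos : ∀ t, a ≤ t → 0 < f t) (hf : ∀ t, a ≤ t → HasDerivAt f (f' t) t)
    (hle : ∀ t, a ≤ t → f' t ≤ -(c * f t ^ 2)) {t : ℝ} (ht : a ≤ t) :
    (f a)⁻¹ + c * (t - a) ≤ (f t)⁻¹ := by
  have hinv : ∀ s, a ≤ s → HasDerivAt (fun u => (f u)⁻¹ - c * u) (-f' s / f s ^ 2 - c) s :=
    fun s hs => by
      simpa only [neg_div, mul_one] using
        ((hf s hs).fun_inv (hpos s hs).ne').fun_sub ((hasDerivAt_id' s).const_mul c)
  have hmono : MonotoneOn (fun u => (f u)⁻¹ - c * u) (Set.Ici a) := by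
    refine monotoneOn_of_hasDerivWithinAt_nonneg (convex_Ici a)
      (fun s hs => (hinv s hs).continuousAt.continuousWithinAt)
      (fun s hs => (hinv s (interior_subset hs)).hasDerivWithinAt) fun s hs => ?_
    have hs : a ≤ s := interior_subset hs
    rw [sub_nonneg, le_div_iff₀ (pow_pos (hpos s hs) 2)]
    linarith [hle s hs]
  have := hmono Set.self_mem_Ici ht ht
  simp only at this
  linarith

section GradientFlow

variable {E : Type*} [NormedAddCommGroup E] [InnerProductSpace ℝ E] [CompleteSpace E]

theorem HasGradientAt.hasDerivAt_comp_gradientFlow {L : E → ℝ} {w : ℝ → E} {g : E} {t : ℝ}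
    (hL : HasGradientAt L g (w t)) (hw : HasDerivAt w (-g) t) :
    HasDerivAt (fun s => L (w s)) (-‖g‖ ^ 2) t := by
  have := (hasGradientAt_iff_hasFDerivAt.mp hL).comp_hasDerivAt t hw
  rwa [InnerProductSpace.toDual_apply_apply, inner_neg_right, real_inner_self_eq_norm_sq] at this

end GradientFlow

section ExponentialRisk

variable {ι E : Type*} [Fintype ι] [NormedAddCommGroup E] [InnerProductSpace ℝ E]

theorem mul_sum_le_norm_sum_smul_of_margin {x : ι → E} {a : ι → ℝ} {γ : ℝ} {w₀ : E}
    (ha : ∀ i, 0 ≤ a i) (hw₀ : ‖w₀‖ ≤ 1) (hsep : ∀ i, γ ≤ ⟪x i, w₀⟫) :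
    γ * ∑ i, a i ≤ ‖∑ i, a i • x i‖ :=
  calc γ * ∑ i, a i ≤ ∑ i, a i * ⟪x i, w₀⟫ := by
        rw [Finset.mul_sum]
        exact Finset.sum_le_sum fun i _ => by
          rw [mul_comm]; exact mul_le_mul_of_nonneg_left (hsep i) (ha i)
    _ = ⟪∑ i, a i • x i, w₀⟫ := by simp only [sum_inner, real_inner_smul_left]
    _ ≤ ‖∑ i, a i • x i‖ * ‖w₀‖ := real_inner_le_norm _ _
    _ ≤ ‖∑ i, a i • x i‖ := mul_le_of_le_one_right (norm_nonneg _) hw₀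

variable [CompleteSpace E]

theorem hasGradientAt_mul_sum_exp_neg_inner (x : ι → E) (c : ℝ) (v : E) :
    HasGradientAt (fun u => c * ∑ i, Real.exp (-⟪x i, u⟫))
      (-∑ i, (c * Real.exp (-⟪x i, v⟫)) • x i) v := by
  have hterm : ∀ i, HasFDerivAt (fun u => Real.exp (-⟪x i, u⟫))
      (-Real.exp (-⟪x i, v⟫) • innerSL ℝ (x i)) v := fun i => by
    simpa [neg_smul, smul_smul] using (innerSL ℝ (x i)).hasFDerivAt.neg.exp
  have hsum := (HasFDerivAt.fun_sum (u := Finset.univ) fun i _ => hterm i).const_mul c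
  rw [hasGradientAt_iff_hasFDerivAt]
  refine hsum.congr_fderiv (ContinuousLinearMap.ext fun u => ?_)
  simp only [InnerProductSpace.toDual_apply_apply, inner_neg_left, sum_inner,
    real_inner_smul_left, smul_apply, sum_apply, innerSL_apply_apply, smul_eq_mul,
    Finset.mul_sum, ← Finset.sum_neg_distrib]
  exact Finset.sum_congr rfl fun i _ => by ring

end ExponentialRisk

theorem stmt_2_general {d m : ℕ} (hm : 0 < m)
    (x : Fin m → EuclideanSpace ℝ (Fin d))
    (γ : ℝ) (hγ : γ ∈ Set.Ioc (0 : ℝ) 1)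
    (w₀ : EuclideanSpace ℝ (Fin d)) (hw₀ : ‖w₀‖ = 1)
    (hsep : ∀ i, γ ≤ ⟪x i, w₀⟫)
    (L : EuclideanSpace ℝ (Fin d) → ℝ)
    (hL : ∀ v, L v = (1 / m) * ∑ i, Real.exp (-⟪x i, v⟫))
    (w : ℝ → EuclideanSpace ℝ (Fin d))
    (hflow : ∀ t : ℝ, 0 ≤ t → HasDerivAt w (-(gradient L (w t))) t) :
    ∀ T : ℝ, 0 < T → L (w T) ≤ 1 / (γ ^ 2 * T) := by
  intro T hT
  have hgrad (v) : HasGradientAt L (-∑ i, ((1 / m : ℝ) * Real.exp (-⟪x i, v⟫)) • x i) v := by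
    simpa only [← funext hL] using hasGradientAt_mul_sum_exp_neg_inner x (1 / m : ℝ) v
  have hpos (v) : 0 < L v := by
    have : Nonempty (Fin m) := ⟨⟨0, hm⟩⟩
    rw [hL]
    exact mul_pos (by positivity) (Finset.sum_pos (fun i _ => Real.exp_pos _) Finset.univ_nonempty)
  have hmargin (v) : γ * L v ≤ ‖gradient L v‖ := by
    rw [(hgrad v).gradient, norm_neg, hL, Finset.mul_sum]
    exact mul_sum_le_norm_sum_smul_of_margin (fun i => by positivity) hw₀.le hsep
  have hdecay (t) (ht : 0 ≤ t) : -‖gradient L (w t)‖ ^ 2 ≤ -(γ ^ 2 * L (w t) ^ 2) := by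
    rw [neg_le_neg_iff, ← mul_pow]
    exact pow_le_pow_left₀ (mul_pos hγ.1 (hpos _)).le (hmargin _) 2
  have hgrowth := inv_add_mul_sub_le_inv_of_hasDerivAt_le_neg_mul_sq (fun t _ => hpos (w t))
    (fun t ht => (hgrad (w t)).differentiableAt.hasGradientAt.hasDerivAt_comp_gradientFlow
      (hflow t ht)) hdecay hT.le
  rw [sub_zero] at hgrowth
  rw [one_div, ← le_inv_comm₀ (by positivity [hγ.1]) (hpos _)]
  linarith [inv_pos.mpr (hpos (w 0))]

/-- Lemma 2 of the paper. For the exponential loss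
`ℓ(z) = exp(−z)`, gradient flow on the empirical risk of a dataset separable
with margin `γ` satisfies `L̂(w(T)) ≤ 1/(γ²T)` for every `T > 0`. -/
theorem stmt_2 {d m : ℕ} (hm : 0 < m)
    (x : Fin m → EuclideanSpace ℝ (Fin d)) (hx : ∀ i, ‖x i‖ ≤ 1)
    (γ : ℝ) (hγ : γ ∈ Set.Ioc (0 : ℝ) 1)
    (w₀ : EuclideanSpace ℝ (Fin d)) (hw₀ : ‖w₀‖ = 1)
    (hsep : ∀ i, γ ≤ ⟪x i, w₀⟫)
    (L : EuclideanSpace ℝ (Fin d) → ℝ)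
    (hL : ∀ v, L v = (1 / m) * ∑ i, Real.exp (-⟪x i, v⟫))
    (w : ℝ → EuclideanSpace ℝ (Fin d)) (hw0 : w 0 = 0)
    (hflow : ∀ t : ℝ, 0 ≤ t → HasDerivAt w (-(gradient L (w t))) t) :
    ∀ T : ℝ, 0 < T → L (w T) ≤ 1 / (γ ^ 2 * T) :=
  stmt_2_general hm x γ hγ w₀ hw₀ hsep L hL w hflow
end

section
/- Let x_1,…,x_m ∈ ℝ^d satisfy max_i ‖x_i‖ ≤ 1 and be separable with margin γ ∈ (0,1]. For the exponential loss ℓ(z) = exp(−z), the empirical risk L̂(w) = (1/m)Σ_i ℓ(x_iᵀw) satisfies, for every w ∈ ℝ^d, the inequality ‖∇L̂(w)‖² ≥ γ² · L̂(w)². -/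
open scoped RealInnerProductSpace

/-! The gradient is `∇L̂(w) = -(1/m) Σᵢ exp(-⟪xᵢ, w⟫) xᵢ`, a negative combination of the data
with nonnegative weights. Pairing it with the separator `w₀` and using the margin gives
`⟪-∇L̂(w), w₀⟫ ≥ γ L̂(w)`, and Cauchy–Schwarz turns this into `‖∇L̂(w)‖ ≥ γ L̂(w)`. -/

section Gradient

variable {F : Type*} [NormedAddCommGroup F] [InnerProductSpace ℝ F] [CompleteSpace F]
  {f : F → ℝ} {f' x : F}

theorem HasGradientAt.const_mul (c : ℝ) (h : HasGradientAt f f' x) :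
    HasGradientAt (fun y => c * f y) (c • f') x := by
  rw [hasGradientAt_iff_hasFDerivAt, map_smul]
  exact HasFDerivAt.const_mul h c

theorem HasGradientAt.fun_sum {ι : Type*} {s : Finset ι} {f : ι → F → ℝ} {f' : ι → F}
    (h : ∀ i ∈ s, HasGradientAt (f i) (f' i) x) :
    HasGradientAt (fun y => ∑ i ∈ s, f i y) (∑ i ∈ s, f' i) x := by
  rw [hasGradientAt_iff_hasFDerivAt, map_sum]
  exact HasFDerivAt.fun_sum h

theorem hasGradientAt_exp_neg_inner (a x : F) :
    HasGradientAt (fun y => Real.exp (-⟪a, y⟫)) (-Real.exp (-⟪a, x⟫) • a) x := by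
  rw [hasGradientAt_iff_hasFDerivAt]
  have h : HasFDerivAt (fun y => -⟪a, y⟫) (-innerSL ℝ a) x := (innerSL ℝ a).hasFDerivAt.neg
  refine h.exp.congr_fderiv ?_
  ext y
  simp

end Gradient

theorem margin_mul_sum_le_norm_sum_smul {E ι : Type*} [NormedAddCommGroup E]
    [InnerProductSpace ℝ E] {s : Finset ι} {x : ι → E} {c : ι → ℝ} {γ : ℝ} {w₀ : E}
    (hw₀ : ‖w₀‖ ≤ 1) (hc : ∀ i ∈ s, 0 ≤ c i) (hsep : ∀ i ∈ s, γ ≤ ⟪x i, w₀⟫) :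
    γ * ∑ i ∈ s, c i ≤ ‖∑ i ∈ s, c i • x i‖ :=
  calc γ * ∑ i ∈ s, c i = ∑ i ∈ s, c i * γ := by rw [Finset.mul_sum]; simp_rw [mul_comm]
    _ ≤ ∑ i ∈ s, c i * ⟪x i, w₀⟫ :=
      Finset.sum_le_sum fun i hi => mul_le_mul_of_nonneg_left (hsep i hi) (hc i hi)
    _ = ⟪∑ i ∈ s, c i • x i, w₀⟫ := by simp only [sum_inner, real_inner_smul_left]
    _ ≤ ‖∑ i ∈ s, c i • x i‖ * ‖w₀‖ := real_inner_le_norm _ _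
    _ ≤ ‖∑ i ∈ s, c i • x i‖ := mul_le_of_le_one_right (norm_nonneg _) hw₀

theorem stmt_3_general {d m : ℕ}
    (x : Fin m → EuclideanSpace ℝ (Fin d))
    (γ : ℝ) (hγ : γ ∈ Set.Ioc (0 : ℝ) 1)
    (w₀ : EuclideanSpace ℝ (Fin d)) (hw₀ : ‖w₀‖ = 1)
    (hsep : ∀ i, γ ≤ ⟪x i, w₀⟫)
    (L : EuclideanSpace ℝ (Fin d) → ℝ)
    (hL : ∀ v, L v = (1 / m) * ∑ i, Real.exp (-⟪x i, v⟫)) :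
    ∀ v : EuclideanSpace ℝ (Fin d), γ ^ 2 * (L v) ^ 2 ≤ ‖gradient L v‖ ^ 2 := by
  intro v
  have hgrad : gradient L v = (1 / m : ℝ) • -∑ i, Real.exp (-⟪x i, v⟫) • x i := by
    rw [funext hL, ← Finset.sum_neg_distrib]
    refine (HasGradientAt.fun_sum fun i _ => ?_).const_mul _ |>.gradient
    simpa only [neg_smul] using hasGradientAt_exp_neg_inner (x i) v
  have hmargin := margin_mul_sum_le_norm_sum_smul (s := Finset.univ) hw₀.le
    (fun i _ => (Real.exp_pos (-⟪x i, v⟫)).le) (fun i _ => hsep i)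
  rw [hgrad, hL, norm_smul, norm_neg, Real.norm_of_nonneg (by positivity), ← mul_pow,
    mul_left_comm]
  gcongr
  exact mul_nonneg (by positivity) (mul_nonneg hγ.1.le (by positivity))

/-- key differential inequality. For the exponential loss
`ℓ(z) = exp(−z)` and a dataset separable with margin `γ`, the empirical risk
satisfies `‖∇L̂(w)‖² ≥ γ²·L̂(w)²` for every `w`. -/
theorem stmt_3 {d m : ℕ} (hm : 0 < m)
    (x : Fin m → EuclideanSpace ℝ (Fin d)) (hx : ∀ i, ‖x i‖ ≤ 1)
    (γ : ℝ) (hγ : γ ∈ Set.Ioc (0 : ℝ) 1)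
    (w₀ : EuclideanSpace ℝ (Fin d)) (hw₀ : ‖w₀‖ = 1)
    (hsep : ∀ i, γ ≤ ⟪x i, w₀⟫)
    (L : EuclideanSpace ℝ (Fin d) → ℝ)
    (hL : ∀ v, L v = (1 / m) * ∑ i, Real.exp (-⟪x i, v⟫)) :
    ∀ v : EuclideanSpace ℝ (Fin d), γ ^ 2 * (L v) ^ 2 ≤ ‖gradient L v‖ ^ 2 :=
  stmt_3_general x γ hγ w₀ hw₀ hsep L hL
end

section
/- Let x_1,…,x_m ∈ ℝ^d satisfy max_i ‖x_i‖ ≤ 1 and be separable with margin γ ∈ (0,1], let ℓ(z) = exp(−z) be the exponential loss, and let w(·) be the gradient flow of the empirical risk L̂ started at the origin. Then for any time T > 1/γ² and any α ∈ [0,1], at least (1 − (γ²T)^{−α})·m of the indices i ∈ {1,…,m} satisfy x_iᵀ(w(T)/‖w(T)‖) > (1−α)γ/2. -/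
/-!
Along the gradient flow of the exponential risk `L`, separability with margin `γ` gives the
gradient-domination inequality `γ L ≤ ‖∇L‖`. Since `(L ∘ w)' = -‖∇L‖² ≤ -γ² L²`, the risk decays
like `L(w T) ≤ 1 / (1 + γ² T)`; since `‖w'‖ = ‖∇L‖ ≤ ‖∇L‖² / (γ L) = -(log L ∘ w)' / γ`, the
iterate grows at most like `‖w T‖ ≤ -log L(w T) / γ`. A Markov bound then shows that the indices
with normalized margin at most `θ` number at most `m L e^{θ ‖w T‖} ≤ m L^{1 - θ/γ}`, and the choice
`θ = (1 - α) γ / 2` turns this into `m (γ² T)^{-α}`.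
-/

open scoped RealInnerProductSpace Gradient
open Finset Real Set

theorem inv_add_mul_le_inv_of_deriv_le {g g' : ℝ → ℝ} {a b c : ℝ} (hab : a ≤ b)
    (hg : ∀ t ∈ Icc a b, HasDerivAt g (g' t) t) (hpos : ∀ t ∈ Icc a b, 0 < g t)
    (hg' : ∀ t ∈ Ioo a b, g' t ≤ -(c * g t ^ 2)) :
    (g a)⁻¹ + c * (b - a) ≤ (g b)⁻¹ := by
  have hderiv : ∀ t ∈ Icc a b, HasDerivAt (fun s => (g s)⁻¹ - c * s) (-g' t / g t ^ 2 - c) t :=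
    fun t ht => ((hg t ht).inv (hpos t ht).ne').sub (by simpa using (hasDerivAt_id t).const_mul c)
  have hmono : MonotoneOn (fun s => (g s)⁻¹ - c * s) (Icc a b) := by
    refine monotoneOn_of_deriv_nonneg (convex_Icc a b)
      (HasDerivAt.continuousOn fun t ht => hderiv t ht) ?_ ?_ <;> rw [interior_Icc]
    · exact fun t ht => (hderiv t (Ioo_subset_Icc_self ht)).differentiableAt.differentiableWithinAt
    · intro t ht
      have hgt := hpos t (Ioo_subset_Icc_self ht)
      rw [(hderiv t (Ioo_subset_Icc_self ht)).deriv, sub_nonneg, le_div_iff₀ (by positivity)]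
      linarith [hg' t ht]
  have := hmono (left_mem_Icc.2 hab) (right_mem_Icc.2 hab) hab
  simp only at this
  linarith

theorem rpow_le_rpow_neg_of_le_inv {y s p q : ℝ} (hy : 0 ≤ y) (hs : 1 ≤ s) (hys : y ≤ s⁻¹)
    (hp : 0 ≤ p) (hqp : q ≤ p) : y ^ p ≤ s ^ (-q) :=
  calc y ^ p ≤ s⁻¹ ^ p := rpow_le_rpow hy hys hp
    _ = s ^ (-p) := by rw [inv_rpow (by linarith), ← rpow_neg (by linarith)]
    _ ≤ s ^ (-q) := rpow_le_rpow_of_exponent_le hs (neg_le_neg hqp)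

section GradientFlow

variable {E : Type*} [NormedAddCommGroup E] [InnerProductSpace ℝ E]
  {f : E → ℝ} {w : ℝ → E} {γ a b : ℝ}

theorem norm_sub_le_log_sub_log_div {w' : ℝ → E} {g g' : ℝ → ℝ} (hab : a ≤ b) (hγ : 0 < γ)
    (hw : ∀ t ∈ Icc a b, HasDerivAt w (w' t) t) (hg : ∀ t ∈ Icc a b, HasDerivAt g (g' t) t)
    (hpos : ∀ t ∈ Icc a b, 0 < g t) (h : ∀ t ∈ Ico a b, γ * g t * ‖w' t‖ ≤ -g' t) :
    ‖w b - w a‖ ≤ (log (g a) - log (g b)) / γ := by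
  have hlog : ∀ t ∈ Icc a b,
      HasDerivAt (fun s => (log (g a) - log (g s)) / γ) (-(g' t / g t) / γ) t := fun t ht =>
    (((hg t ht).log (hpos t ht).ne').const_sub _).div_const γ |>.congr_deriv (by ring)
  refine image_norm_le_of_norm_deriv_right_le_deriv_boundary' (f := fun t => w t - w a)
    (HasDerivAt.continuousOn fun t ht => (hw t ht).sub_const _)
    (fun t ht => ((hw t (Ico_subset_Icc_self ht)).sub_const _).hasDerivWithinAt)
    (by simp) (HasDerivAt.continuousOn hlog)
    (fun t ht => (hlog t (Ico_subset_Icc_self ht)).hasDerivWithinAt) (fun t ht => ?_)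
    (right_mem_Icc.2 hab)
  have hgt := hpos t (Ico_subset_Icc_self ht)
  rw [neg_div, div_div, ← neg_div, le_div_iff₀ (by positivity)]
  linarith [h t ht]

variable [CompleteSpace E]

theorem hasDerivAt_comp_of_hasDerivAt_neg_gradient {t : ℝ} (hf : DifferentiableAt ℝ f (w t))
    (hw : HasDerivAt w (-∇ f (w t)) t) :
    HasDerivAt (fun s => f (w s)) (-‖∇ f (w t)‖ ^ 2) t := by
  have h := hf.hasGradientAt.hasFDerivAt.comp_hasDerivAt t hw
  rwa [InnerProductSpace.toDual_apply_apply, inner_neg_right, real_inner_self_eq_norm_sq] at h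

theorem inv_add_sq_mul_le_inv_of_gradientFlow (hf : Differentiable ℝ f) (hpos : ∀ v, 0 < f v)
    (hPL : ∀ v, γ * f v ≤ ‖∇ f v‖) (hγ : 0 ≤ γ) (hab : a ≤ b)
    (hw : ∀ t ∈ Icc a b, HasDerivAt w (-∇ f (w t)) t) :
    (f (w a))⁻¹ + γ ^ 2 * (b - a) ≤ (f (w b))⁻¹ :=
  inv_add_mul_le_inv_of_deriv_le hab
    (fun t ht => hasDerivAt_comp_of_hasDerivAt_neg_gradient (hf _) (hw t ht))
    (fun _ _ => hpos _) fun t _ => by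
      have := pow_le_pow_left₀ (mul_nonneg hγ (hpos (w t)).le) (hPL (w t)) 2
      linarith [mul_pow γ (f (w t)) 2]

theorem norm_sub_le_log_sub_log_div_of_gradientFlow (hf : Differentiable ℝ f)
    (hpos : ∀ v, 0 < f v) (hPL : ∀ v, γ * f v ≤ ‖∇ f v‖) (hγ : 0 < γ) (hab : a ≤ b)
    (hw : ∀ t ∈ Icc a b, HasDerivAt w (-∇ f (w t)) t) :
    ‖w b - w a‖ ≤ (log (f (w a)) - log (f (w b))) / γ :=
  norm_sub_le_log_sub_log_div hab hγ hw
    (fun t ht => hasDerivAt_comp_of_hasDerivAt_neg_gradient (hf _) (hw t ht))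
    (fun _ _ => hpos _) fun t _ => by
      rw [norm_neg, neg_neg, sq]
      exact mul_le_mul_of_nonneg_right (hPL _) (norm_nonneg _)

end GradientFlow

variable {ι E : Type*} [Fintype ι] [NormedAddCommGroup E] [InnerProductSpace ℝ E]

noncomputable def expRisk (x : ι → E) (v : E) : ℝ :=
  (Fintype.card ι : ℝ)⁻¹ * ∑ i, exp (-⟪x i, v⟫)

namespace expRisk

variable (x : ι → E)

theorem pos [Nonempty ι] (v : E) : 0 < expRisk x v := by
  have := Fintype.card_pos (α := ι)
  have : 0 < ∑ i, exp (-⟪x i, v⟫) := sum_pos (fun i _ => exp_pos _) univ_nonempty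
  unfold expRisk
  positivity

theorem apply_zero [Nonempty ι] : expRisk x 0 = 1 := by
  simp [expRisk]

theorem hasGradientAt [CompleteSpace E] (v : E) :
    HasGradientAt (expRisk x) (-((Fintype.card ι : ℝ)⁻¹ • ∑ i, exp (-⟪x i, v⟫) • x i)) v := by
  rw [hasGradientAt_iff_hasFDerivAt]
  have hterm (i : ι) : HasFDerivAt (fun u => exp (-⟪x i, u⟫))
      (exp (-⟪x i, v⟫) • -innerSL ℝ (x i)) v :=
    (hasDerivAt_exp _).comp_hasFDerivAt v (innerSL ℝ (x i)).hasFDerivAt.neg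
  refine ((HasFDerivAt.fun_sum fun i (_ : i ∈ Finset.univ) => hterm i).const_mul
    (Fintype.card ι : ℝ)⁻¹).congr_fderiv ?_
  ext y
  simp [mul_sum, real_inner_comm]

theorem differentiable [CompleteSpace E] : Differentiable ℝ (expRisk x) :=
  fun v => (hasGradientAt x v).differentiableAt

theorem card_inner_le_mul_exp_le (v : E) (θ : ℝ) :
    #{i | ⟪x i, ‖v‖⁻¹ • v⟫ ≤ θ} * exp (-(θ * ‖v‖)) ≤ Fintype.card ι * expRisk x v := by
  have hinner (i : ι) : ⟪x i, v⟫ = ‖v‖ * ⟪x i, ‖v‖⁻¹ • v⟫ := by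
    rcases eq_or_ne v 0 with rfl | hv
    · simp
    · rw [real_inner_smul_right, mul_inv_cancel_left₀ (norm_ne_zero_iff.2 hv)]
  calc (#{i | ⟪x i, ‖v‖⁻¹ • v⟫ ≤ θ} : ℝ) * exp (-(θ * ‖v‖))
      = ∑ i with ⟪x i, ‖v‖⁻¹ • v⟫ ≤ θ, exp (-(θ * ‖v‖)) := by rw [sum_const, nsmul_eq_mul]
    _ ≤ ∑ i with ⟪x i, ‖v‖⁻¹ • v⟫ ≤ θ, exp (-⟪x i, v⟫) := by
      gcongr with i hi
      rw [hinner, mul_comm θ]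
      exact mul_le_mul_of_nonneg_left (mem_filter.1 hi).2 (norm_nonneg v)
    _ ≤ ∑ i, exp (-⟪x i, v⟫) :=
      sum_le_sum_of_subset_of_nonneg (subset_univ _) fun _ _ _ => (exp_pos _).le
    _ = Fintype.card ι * expRisk x v := by
      rcases isEmpty_or_nonempty ι with hι | hι
      · simp
      · rw [expRisk, mul_inv_cancel_left₀ (Nat.cast_ne_zero.2 Fintype.card_ne_zero)]

theorem card_inner_le_le_mul_rpow [Nonempty ι] {γ θ : ℝ} {v : E} (hθ : 0 ≤ θ)
    (hv : ‖v‖ ≤ -log (expRisk x v) / γ) :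
    (#{i | ⟪x i, ‖v‖⁻¹ • v⟫ ≤ θ} : ℝ) ≤ Fintype.card ι * expRisk x v ^ (1 - θ / γ) := by
  have hL := pos x v
  have hexp : exp (θ * ‖v‖) ≤ expRisk x v ^ (-(θ / γ)) := by
    rw [rpow_def_of_pos hL, exp_le_exp]
    calc θ * ‖v‖ ≤ θ * (-log (expRisk x v) / γ) := mul_le_mul_of_nonneg_left hv hθ
      _ = log (expRisk x v) * -(θ / γ) := by ring
  calc (#{i | ⟪x i, ‖v‖⁻¹ • v⟫ ≤ θ} : ℝ)
      = #{i | ⟪x i, ‖v‖⁻¹ • v⟫ ≤ θ} * exp (-(θ * ‖v‖)) * exp (θ * ‖v‖) := by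
        rw [mul_assoc, ← exp_add, neg_add_cancel, exp_zero, mul_one]
    _ ≤ Fintype.card ι * expRisk x v * expRisk x v ^ (-(θ / γ)) :=
        mul_le_mul (card_inner_le_mul_exp_le x v θ) hexp (exp_pos _).le (by positivity)
    _ = Fintype.card ι * expRisk x v ^ (1 - θ / γ) := by
        rw [sub_eq_add_neg, rpow_add hL, rpow_one, mul_assoc]

theorem one_sub_rpow_mul_card_le_card_lt_inner [Nonempty ι] {γ θ : ℝ} {v : E} (hθ : 0 ≤ θ)
    (hv : ‖v‖ ≤ -log (expRisk x v) / γ) :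
    (1 - expRisk x v ^ (1 - θ / γ)) * Fintype.card ι ≤ #{i | θ < ⟪x i, ‖v‖⁻¹ • v⟫} := by
  have hsplit := card_filter_add_card_filter_not (s := univ) fun i => θ < ⟪x i, ‖v‖⁻¹ • v⟫
  simp only [not_lt, card_univ] at hsplit
  have hcast : (#{i | θ < ⟪x i, ‖v‖⁻¹ • v⟫} : ℝ) + #{i | ⟪x i, ‖v‖⁻¹ • v⟫ ≤ θ} =
      Fintype.card ι := by
    exact_mod_cast hsplit
  linarith [card_inner_le_le_mul_rpow x hθ hv]

variable {x} {γ : ℝ} {u : E}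

theorem mul_le_inner_neg_gradient [CompleteSpace E] (hsep : ∀ i, γ ≤ ⟪x i, u⟫) (v : E) :
    γ * expRisk x v ≤ ⟪u, -∇ (expRisk x) v⟫ := by
  rw [(hasGradientAt x v).gradient, neg_neg, expRisk, inner_smul_right, inner_sum, mul_left_comm,
    mul_sum]
  gcongr with i
  rw [real_inner_smul_right, real_inner_comm (x i) u, mul_comm γ]
  exact mul_le_mul_of_nonneg_left (hsep i) (exp_pos _).le

theorem mul_le_norm_gradient [CompleteSpace E] (hu : ‖u‖ ≤ 1) (hsep : ∀ i, γ ≤ ⟪x i, u⟫)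
    (v : E) : γ * expRisk x v ≤ ‖∇ (expRisk x) v‖ :=
  calc γ * expRisk x v ≤ ⟪u, -∇ (expRisk x) v⟫ := mul_le_inner_neg_gradient hsep v
    _ ≤ ‖u‖ * ‖∇ (expRisk x) v‖ := by
      simpa only [norm_neg] using real_inner_le_norm u (-∇ (expRisk x) v)
    _ ≤ ‖∇ (expRisk x) v‖ := mul_le_of_le_one_left (norm_nonneg _) hu

end expRisk

theorem stmt_4_general {d m : ℕ} (hm : 0 < m)
    (x : Fin m → EuclideanSpace ℝ (Fin d))
    (γ : ℝ) (hγ : γ ∈ Set.Ioc (0 : ℝ) 1)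
    (w₀ : EuclideanSpace ℝ (Fin d)) (hw₀ : ‖w₀‖ = 1)
    (hsep : ∀ i, γ ≤ ⟪x i, w₀⟫)
    (L : EuclideanSpace ℝ (Fin d) → ℝ)
    (hL : ∀ v, L v = (1 / m) * ∑ i, Real.exp (-⟪x i, v⟫))
    (w : ℝ → EuclideanSpace ℝ (Fin d)) (hw0 : w 0 = 0)
    (hflow : ∀ t : ℝ, 0 ≤ t → HasDerivAt w (-(gradient L (w t))) t)
    (T : ℝ) (hT : 1 / γ ^ 2 < T)
    (α : ℝ) (hα : α ∈ Set.Icc (0 : ℝ) 1) :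
    ∃ S : Finset (Fin m), (1 - (γ ^ 2 * T) ^ (-α)) * m ≤ S.card ∧
      ∀ i ∈ S, (1 - α) * γ / 2 < ⟪x i, ‖w T‖⁻¹ • w T⟫ := by
  have : Nonempty (Fin m) := ⟨⟨0, hm⟩⟩
  obtain rfl : L = expRisk x := funext fun v => by rw [hL, expRisk, Fintype.card_fin, one_div]
  obtain ⟨hγ0, -⟩ := hγ
  obtain ⟨hα0, hα1⟩ := hα
  have hγT : 1 < γ ^ 2 * T := by rwa [div_lt_iff₀ (by positivity), mul_comm] at hT
  have hT0 : 0 ≤ T := ((one_div_pos.2 (by positivity)).trans hT).le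
  have hPL := expRisk.mul_le_norm_gradient hw₀.le hsep
  have hflowT : ∀ t ∈ Icc 0 T, HasDerivAt w (-∇ (expRisk x) (w t)) t := fun t ht => hflow t ht.1
  have hrisk : 1 + γ ^ 2 * T ≤ (expRisk x (w T))⁻¹ := by
    simpa [hw0, expRisk.apply_zero] using inv_add_sq_mul_le_inv_of_gradientFlow
      (expRisk.differentiable x) (expRisk.pos x) hPL hγ0.le hT0 hflowT
  have hnorm : ‖w T‖ ≤ -log (expRisk x (w T)) / γ := by
    simpa [hw0, expRisk.apply_zero, neg_div] using norm_sub_le_log_sub_log_div_of_gradientFlow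
      (expRisk.differentiable x) (expRisk.pos x) hPL hγ0 hT0 hflowT
  have hLT : expRisk x (w T) ≤ (γ ^ 2 * T)⁻¹ := by
    rw [le_inv_comm₀ (expRisk.pos x _) (by positivity)]
    linarith
  have hexp : 1 - (1 - α) * γ / 2 / γ = (1 + α) / 2 := by field_simp; ring
  refine ⟨univ.filter fun i => (1 - α) * γ / 2 < ⟪x i, ‖w T‖⁻¹ • w T⟫, ?_,
    fun i hi => (mem_filter.1 hi).2⟩
  calc (1 - (γ ^ 2 * T) ^ (-α)) * m
      ≤ (1 - expRisk x (w T) ^ (1 - (1 - α) * γ / 2 / γ)) * Fintype.card (Fin m) := by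
        rw [hexp, Fintype.card_fin]
        gcongr
        exact rpow_le_rpow_neg_of_le_inv (expRisk.pos x _).le hγT.le hLT (by linarith)
          (by linarith)
    _ ≤ _ := expRisk.one_sub_rpow_mul_card_le_card_lt_inner x
        (div_nonneg (mul_nonneg (by linarith) hγ0.le) zero_le_two) hnorm

/-- Theorem 2 of the paper. For the exponential loss and
gradient flow on a dataset separable with margin `γ`, for any `T > 1/γ²` and
`α ∈ [0,1]`, at least `(1 − (γ²T)^{−α})·m` of the indices `i` satisfy
`xᵢᵀ(w(T)/‖w(T)‖) > (1−α)γ/2`. -/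
theorem stmt_4 {d m : ℕ} (hm : 0 < m)
    (x : Fin m → EuclideanSpace ℝ (Fin d)) (hx : ∀ i, ‖x i‖ ≤ 1)
    (γ : ℝ) (hγ : γ ∈ Set.Ioc (0 : ℝ) 1)
    (w₀ : EuclideanSpace ℝ (Fin d)) (hw₀ : ‖w₀‖ = 1)
    (hsep : ∀ i, γ ≤ ⟪x i, w₀⟫)
    (L : EuclideanSpace ℝ (Fin d) → ℝ)
    (hL : ∀ v, L v = (1 / m) * ∑ i, Real.exp (-⟪x i, v⟫))
    (w : ℝ → EuclideanSpace ℝ (Fin d)) (hw0 : w 0 = 0)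
    (hflow : ∀ t : ℝ, 0 ≤ t → HasDerivAt w (-(gradient L (w t))) t)
    (T : ℝ) (hT : 1 / γ ^ 2 < T)
    (α : ℝ) (hα : α ∈ Set.Icc (0 : ℝ) 1) :
    ∃ S : Finset (Fin m), (1 - (γ ^ 2 * T) ^ (-α)) * m ≤ S.card ∧
      ∀ i ∈ S, (1 - α) * γ / 2 < ⟪x i, ‖w T‖⁻¹ • w T⟫ :=
  stmt_4_general hm x γ hγ w₀ hw₀ hsep L hL w hw0 hflow T hT α hα
end

section
/- Let x_1,…,x_m ∈ ℝ^d satisfy max_i ‖x_i‖ ≤ 1 and be separable with margin γ ∈ (0,1], let ℓ be a convex, differentiable, monotonically decreasing loss admitting an inverse ℓ⁻¹ on (0, ℓ(0)], whose derivative ℓ' is μ-Lipschitz, and consider gradient descent iterates w_1 = 0, w_{t+1} = w_t − η_t∇L̂(w_t) with step sizes 0 < η_t ≤ 1/μ. Fix an index T ≥ 1 and let w* be any vector with L̂(w*) ≤ L̂(w_T). Then max_{t ∈ {1,…,T}} ‖w_t‖ ≤ 2‖w*‖. -/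
/-!
Smoothness with `η ≤ 1/μ` makes every gradient step decrease the risk by at least
`η/2 ‖∇L̂(w_t)‖²`, so `L̂(w*) ≤ L̂(w_T) ≤ L̂(w_{t+1})` for `t < T`. Expanding
`‖w_{t+1} - w*‖²` and bounding `⟪w_t - w*, ∇L̂(w_t)⟫ ≥ L̂(w_t) - L̂(w*)` by convexity, this
decrease pays for the quadratic term, so `‖w_t - w*‖` never increases up to time `T`. Since
`w_1 = 0`, `‖w_t - w*‖ ≤ ‖w*‖`, and the triangle inequality gives `‖w_t‖ ≤ 2‖w*‖`.
-/

open scoped RealInnerProductSpace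

section Loss

variable {ℓ ℓ' : ℝ → ℝ}

lemma ConvexOn.add_deriv_mul_sub_le (hconv : ConvexOn ℝ Set.univ ℓ)
    (hderiv : ∀ z, HasDerivAt ℓ (ℓ' z) z) (a b : ℝ) :
    ℓ a + ℓ' a * (b - a) ≤ ℓ b := by
  rcases lt_trichotomy a b with hab | rfl | hba
  · have hs := hconv.le_slope_of_hasDerivAt (Set.mem_univ a) (Set.mem_univ b) hab (hderiv a)
    rw [slope_def_field, le_div_iff₀ (sub_pos.2 hab)] at hs
    linarith
  · simp
  · have hs := hconv.slope_le_of_hasDerivAt (Set.mem_univ b) (Set.mem_univ a) hba (hderiv a)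
    rw [slope_def_field, div_le_iff₀ (sub_pos.2 hba)] at hs
    linarith

lemma le_add_deriv_mul_sub_add_sq {μ : ℝ} (hderiv : ∀ z, HasDerivAt ℓ (ℓ' z) z)
    (hlip : ∀ a b : ℝ, |ℓ' a - ℓ' b| ≤ μ * |a - b|) (a b : ℝ) :
    ℓ b ≤ ℓ a + ℓ' a * (b - a) + μ / 2 * (b - a) ^ 2 := by
  set c := b - a
  let φ : ℝ → ℝ := fun t => ℓ (a + t * c) - t * (ℓ' a * c) - μ / 2 * t ^ 2 * c ^ 2
  have hφ : ∀ t, HasDerivAt φ ((ℓ' (a + t * c) - ℓ' a) * c - μ * t * c ^ 2) t := by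
    intro t
    have := (((hderiv _).comp t ((hasDerivAt_mul_const c).const_add a)).sub
      ((hasDerivAt_id t).mul_const (ℓ' a * c))).sub
      (((hasDerivAt_pow 2 t).const_mul (μ / 2)).mul_const (c ^ 2))
    refine (this : HasDerivAt φ _ t).congr_deriv ?_
    norm_num
    ring
  have hφ' : ∀ t ∈ Set.Ioo (0 : ℝ) 1, (ℓ' (a + t * c) - ℓ' a) * c - μ * t * c ^ 2 ≤ 0 := by
    intro t ht
    suffices (ℓ' (a + t * c) - ℓ' a) * c ≤ μ * t * c ^ 2 by linarith
    calc (ℓ' (a + t * c) - ℓ' a) * c ≤ |ℓ' (a + t * c) - ℓ' a| * |c| := by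
          rw [← abs_mul]; exact le_abs_self _
      _ ≤ μ * |t * c| * |c| := by gcongr; simpa using hlip (a + t * c) a
      _ = μ * t * c ^ 2 := by rw [abs_mul, abs_of_pos ht.1, ← sq_abs c]; ring
  have hanti : AntitoneOn φ (Set.Icc 0 1) :=
    antitoneOn_of_hasDerivWithinAt_nonpos (convex_Icc 0 1)
      (fun t _ => (hφ t).continuousAt.continuousWithinAt)
      (fun t _ => (hφ t).hasDerivWithinAt) (by simpa using hφ')
  have h10 := hanti (Set.left_mem_Icc.2 zero_le_one) (Set.right_mem_Icc.2 zero_le_one) zero_le_one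
  simp only [φ, c, one_mul, add_sub_cancel, zero_mul, add_zero] at h10
  linarith

end Loss

section EmpiricalRisk

variable {E : Type*} [NormedAddCommGroup E] [InnerProductSpace ℝ E] {m : ℕ}

noncomputable def empiricalRisk (ℓ : ℝ → ℝ) (x : Fin m → E) (v : E) : ℝ :=
  (1 / m) * ∑ i, ℓ ⟪x i, v⟫

noncomputable def empiricalRiskGrad (ℓ' : ℝ → ℝ) (x : Fin m → E) (v : E) : E :=
  (1 / m : ℝ) • ∑ i, ℓ' ⟪x i, v⟫ • x i

variable {ℓ ℓ' : ℝ → ℝ}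

lemma hasGradientAt_empiricalRisk [CompleteSpace E] (hderiv : ∀ z, HasDerivAt ℓ (ℓ' z) z)
    (x : Fin m → E) (v : E) :
    HasGradientAt (empiricalRisk ℓ x) (empiricalRiskGrad ℓ' x v) v := by
  rw [hasGradientAt_iff_hasFDerivAt]
  have hi : ∀ i, HasFDerivAt (fun u => ℓ ⟪x i, u⟫) (ℓ' ⟪x i, v⟫ • innerSL ℝ (x i)) v :=
    fun i => (hderiv _).comp_hasFDerivAt v (innerSL ℝ (x i)).hasFDerivAt
  refine ((HasFDerivAt.fun_sum fun i _ => hi i).const_mul ((1 : ℝ) / m)).congr_fderiv ?_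
  ext u
  simp [empiricalRiskGrad, InnerProductSpace.toDual_apply_apply]

lemma empiricalRisk_add_inner_grad (x : Fin m → E) (u v : E) :
    empiricalRisk ℓ x v + ⟪empiricalRiskGrad ℓ' x v, u - v⟫ =
      (1 / m) * ∑ i, (ℓ ⟪x i, v⟫ + ℓ' ⟪x i, v⟫ * ⟪x i, u - v⟫) := by
  simp [empiricalRisk, empiricalRiskGrad, real_inner_smul_left, sum_inner,
    Finset.sum_add_distrib, mul_add]

lemma empiricalRisk_add_inner_grad_le (hconv : ConvexOn ℝ Set.univ ℓ)
    (hderiv : ∀ z, HasDerivAt ℓ (ℓ' z) z) (x : Fin m → E) (u v : E) :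
    empiricalRisk ℓ x v + ⟪empiricalRiskGrad ℓ' x v, u - v⟫ ≤ empiricalRisk ℓ x u := by
  rw [empiricalRisk_add_inner_grad, empiricalRisk]
  gcongr with i
  simpa [inner_sub_right] using hconv.add_deriv_mul_sub_le hderiv ⟪x i, v⟫ ⟪x i, u⟫

lemma empiricalRisk_le_add_inner_grad_add_sq {μ : ℝ} (hμ : 0 ≤ μ)
    (hderiv : ∀ z, HasDerivAt ℓ (ℓ' z) z) (hlip : ∀ a b : ℝ, |ℓ' a - ℓ' b| ≤ μ * |a - b|)
    {x : Fin m → E} (hx : ∀ i, ‖x i‖ ≤ 1) (u v : E) :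
    empiricalRisk ℓ x u ≤
      empiricalRisk ℓ x v + ⟪empiricalRiskGrad ℓ' x v, u - v⟫ + μ / 2 * ‖u - v‖ ^ 2 := by
  have hi : ∀ i, ℓ ⟪x i, u⟫ ≤
      ℓ ⟪x i, v⟫ + ℓ' ⟪x i, v⟫ * ⟪x i, u - v⟫ + μ / 2 * ‖u - v‖ ^ 2 := by
    intro i
    have hsq : ⟪x i, u - v⟫ ^ 2 ≤ ‖u - v‖ ^ 2 := by
      rw [← sq_abs]
      gcongr
      calc |⟪x i, u - v⟫| ≤ ‖x i‖ * ‖u - v‖ := abs_real_inner_le_norm _ _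
        _ ≤ ‖u - v‖ := mul_le_of_le_one_left (norm_nonneg _) (hx i)
    have := le_add_deriv_mul_sub_add_sq hderiv hlip ⟪x i, v⟫ ⟪x i, u⟫
    rw [← inner_sub_right] at this
    nlinarith
  have havg : (1 / m : ℝ) * m ≤ 1 := by rw [one_div_mul_eq_div]; exact div_self_le_one _
  calc empiricalRisk ℓ x u
      ≤ (1 / m) * ∑ i, (ℓ ⟪x i, v⟫ + ℓ' ⟪x i, v⟫ * ⟪x i, u - v⟫ + μ / 2 * ‖u - v‖ ^ 2) := by
        rw [empiricalRisk]; gcongr with i; exact hi i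
    _ = empiricalRisk ℓ x v + ⟪empiricalRiskGrad ℓ' x v, u - v⟫
          + (1 / m : ℝ) * m * (μ / 2 * ‖u - v‖ ^ 2) := by
        rw [empiricalRisk_add_inner_grad, Finset.sum_add_distrib, Finset.sum_const,
          Finset.card_univ, Fintype.card_fin, nsmul_eq_mul]
        ring
    _ ≤ _ := by linarith [mul_le_of_le_one_left (by positivity : 0 ≤ μ / 2 * ‖u - v‖ ^ 2) havg]

end EmpiricalRisk

section GradientDescent

variable {E : Type*} [NormedAddCommGroup E] [InnerProductSpace ℝ E] {f : E → ℝ} {g : E → E}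
  {μ : ℝ}

lemma apply_sub_smul_add_half_mul_sq_le
    (hsmooth : ∀ u v, f u ≤ f v + ⟪g v, u - v⟫ + μ / 2 * ‖u - v‖ ^ 2) (hμ : 0 < μ) {η : ℝ}
    (hη : 0 ≤ η) (hημ : η ≤ 1 / μ) (v : E) :
    f (v - η • g v) + η / 2 * ‖g v‖ ^ 2 ≤ f v := by
  have h := hsmooth (v - η • g v) v
  rw [sub_sub_cancel_left, inner_neg_right, real_inner_smul_right, real_inner_self_eq_norm_sq,
    norm_neg, norm_smul, Real.norm_of_nonneg hη] at h
  have hμη : μ * η ≤ 1 := by rwa [le_div_iff₀ hμ, mul_comm] at hημ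
  nlinarith [mul_nonneg hη (sq_nonneg ‖g v‖)]

lemma norm_sub_smul_sub_le (hconvex : ∀ u v, f v + ⟪g v, u - v⟫ ≤ f u) {η : ℝ} (hη : 0 ≤ η)
    {u v : E} (hdecrease : f (v - η • g v) + η / 2 * ‖g v‖ ^ 2 ≤ f v)
    (hu : f u ≤ f (v - η • g v)) :
    ‖v - η • g v - u‖ ≤ ‖v - u‖ := by
  have hexpand : ‖v - η • g v - u‖ ^ 2 =
      ‖v - u‖ ^ 2 - 2 * η * ⟪v - u, g v⟫ + η ^ 2 * ‖g v‖ ^ 2 := by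
    rw [sub_right_comm, norm_sub_sq_real, real_inner_smul_right, norm_smul, mul_pow,
      Real.norm_eq_abs, sq_abs]
    ring
  have hinner : f v - f u ≤ ⟪v - u, g v⟫ := by
    have := hconvex u v
    rw [← neg_sub, inner_neg_right, real_inner_comm] at this
    linarith
  refine (sq_le_sq₀ (norm_nonneg _) (norm_nonneg _)).mp ?_
  nlinarith [mul_le_mul_of_nonneg_left hinner hη]

lemma norm_sub_le_of_gradientDescent (hconvex : ∀ u v, f v + ⟪g v, u - v⟫ ≤ f u)
    (hsmooth : ∀ u v, f u ≤ f v + ⟪g v, u - v⟫ + μ / 2 * ‖u - v‖ ^ 2) (hμ : 0 < μ)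
    {η : ℕ → ℝ} (hη : ∀ n, 0 ≤ η n ∧ η n ≤ 1 / μ) {v : ℕ → E}
    (hv : ∀ n, v (n + 1) = v n - η n • g (v n)) {u : E} {N : ℕ} (hu : f u ≤ f (v N))
    {n : ℕ} (hn : n ≤ N) :
    ‖v n - u‖ ≤ ‖v 0 - u‖ := by
  have hdecrease n : f (v (n + 1)) + η n / 2 * ‖g (v n)‖ ^ 2 ≤ f (v n) := by
    rw [hv]; exact apply_sub_smul_add_half_mul_sq_le hsmooth hμ (hη n).1 (hη n).2 _
  have hanti : Antitone (f ∘ v) := antitone_nat_of_succ_le fun n =>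
    le_of_add_le_of_nonneg_left (hdecrease n) (mul_nonneg (by linarith [(hη n).1]) (sq_nonneg _))
  induction n with
  | zero => rfl
  | succ n ih =>
    have hu' : f u ≤ f (v (n + 1)) := hu.trans (hanti hn)
    have hstep := hdecrease n
    rw [hv] at hu' hstep ⊢
    exact (norm_sub_smul_sub_le hconvex (hη n).1 hstep hu').trans (ih (by omega))

end GradientDescent

theorem stmt_6_general {d m : ℕ}
    (x : Fin m → EuclideanSpace ℝ (Fin d)) (hx : ∀ i, ‖x i‖ ≤ 1)
    (ℓ ℓ' : ℝ → ℝ) (hconv : ConvexOn ℝ Set.univ ℓ)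
    (hderiv : ∀ z, HasDerivAt ℓ (ℓ' z) z)
    (μ : ℝ) (hμ : 0 < μ) (hlip : ∀ a b : ℝ, |ℓ' a - ℓ' b| ≤ μ * |a - b|)
    (L : EuclideanSpace ℝ (Fin d) → ℝ)
    (hL : ∀ v, L v = (1 / m) * ∑ i, ℓ ⟪x i, v⟫)
    (η : ℕ → ℝ) (hη : ∀ t, 0 < η t ∧ η t ≤ 1 / μ)
    (w : ℕ → EuclideanSpace ℝ (Fin d)) (hw1 : w 1 = 0)
    (hrec : ∀ t, 1 ≤ t → w (t + 1) = w t - η t • gradient L (w t))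
    (T : ℕ)
    (ws : EuclideanSpace ℝ (Fin d)) (hws : L ws ≤ L (w T)) :
    ∀ t, 1 ≤ t → t ≤ T → ‖w t‖ ≤ 2 * ‖ws‖ := by
  intro t ht htT
  obtain ⟨n, rfl⟩ : ∃ n, t = n + 1 := ⟨t - 1, by omega⟩
  obtain ⟨N, rfl⟩ : ∃ N, T = N + 1 := ⟨T - 1, by omega⟩
  have hLx : L = empiricalRisk ℓ x := funext hL
  subst hLx
  have hdist := norm_sub_le_of_gradientDescent
    (empiricalRisk_add_inner_grad_le hconv hderiv x)
    (empiricalRisk_le_add_inner_grad_add_sq hμ.le hderiv hlip hx) hμ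
    (η := fun n => η (n + 1)) (fun n => ⟨(hη _).1.le, (hη _).2⟩) (v := fun n => w (n + 1))
    (fun n => by
      rw [hrec (n + 1) (by omega), (hasGradientAt_empiricalRisk hderiv x _).gradient])
    hws (Nat.le_of_succ_le_succ htT)
  rw [zero_add, hw1, zero_sub, norm_neg] at hdist
  linarith [norm_sub_norm_le (w (n + 1)) ws]

/-- Lemma 4 of the paper. Under the separability, loss and
smoothness assumptions, for gradient descent iterates `w₁ = 0`,
`w_{t+1} = w_t − η_t ∇L̂(w_t)` with `0 < η_t ≤ 1/μ`: for any `T ≥ 1` and any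
`w*` with `L̂(w*) ≤ L̂(w_T)`, we have `max_{t ∈ [T]} ‖w_t‖ ≤ 2‖w*‖`. -/
theorem stmt_6 {d m : ℕ} (hm : 0 < m)
    (x : Fin m → EuclideanSpace ℝ (Fin d)) (hx : ∀ i, ‖x i‖ ≤ 1)
    (γ : ℝ) (hγ : γ ∈ Set.Ioc (0 : ℝ) 1)
    (w₀ : EuclideanSpace ℝ (Fin d)) (hw₀ : ‖w₀‖ = 1)
    (hsep : ∀ i, γ ≤ ⟪x i, w₀⟫)
    (ℓ ℓ' : ℝ → ℝ) (hconv : ConvexOn ℝ Set.univ ℓ)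
    (hderiv : ∀ z, HasDerivAt ℓ (ℓ' z) z)
    (hanti : StrictAnti ℓ)
    (ℓinv : ℝ → ℝ) (hinv : ∀ z ∈ Set.Ioc (0 : ℝ) (ℓ 0), ℓ (ℓinv z) = z)
    (μ : ℝ) (hμ : 0 < μ) (hlip : ∀ a b : ℝ, |ℓ' a - ℓ' b| ≤ μ * |a - b|)
    (L : EuclideanSpace ℝ (Fin d) → ℝ)
    (hL : ∀ v, L v = (1 / m) * ∑ i, ℓ ⟪x i, v⟫)
    (η : ℕ → ℝ) (hη : ∀ t, 0 < η t ∧ η t ≤ 1 / μ)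
    (w : ℕ → EuclideanSpace ℝ (Fin d)) (hw1 : w 1 = 0)
    (hrec : ∀ t, 1 ≤ t → w (t + 1) = w t - η t • gradient L (w t))
    (T : ℕ) (hT : 1 ≤ T)
    (ws : EuclideanSpace ℝ (Fin d)) (hws : L ws ≤ L (w T)) :
    ∀ t, 1 ≤ t → t ≤ T → ‖w t‖ ≤ 2 * ‖ws‖ :=
  stmt_6_general x hx ℓ ℓ' hconv hderiv μ hμ hlip L hL η hη w hw1 hrec T ws hws
end

section
/- Let x_1,…,x_m ∈ ℝ^d satisfy max_i ‖x_i‖ ≤ 1 and be separable with margin γ ∈ (0,1], let ℓ(z) = log(1 + exp(−z)) be the logistic loss, and consider gradient descent iterates w_1 = 0, w_{t+1} = w_t − ∇L̂(w_t) (step size 1). Then for every T ≥ 1, L̂(w_T) ≤ 1/T + log²(T)/(2γ²T). -/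
/-!
The empirical logistic risk is convex, and it is `1/4`-smooth because `‖xᵢ‖ ≤ 1` and the
sigmoid is `1/4`-Lipschitz; hence a unit gradient step decreases it by at least half the squared
norm of the gradient. The classical telescoping argument for gradient descent then gives
`L̂(w_T) ≤ L̂(u) + ‖u‖² / (2(T - 1))` for every comparator `u`. For `u = (r/γ) w₀` the margin gives
`L̂(u) ≤ ℓ(r)`, and the choice `r = (1 - 1/T) log T` makes the `γ`-dependent terms combine into
`log² T / (2γ²T)`, leaving the scalar inequality `ℓ((1 - 1/T) log T) ≤ 1/T + log² T / (2T²)`. It is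
proved by Taylor estimates for `T ≥ 8` and checked numerically, with rational lower bounds for
`log T`, for `2 ≤ T ≤ 7`.
-/

open scoped RealInnerProductSpace

open Real Finset

noncomputable def logisticLoss (z : ℝ) : ℝ := log (1 + exp (-z))

lemma hasDerivAt_logisticLoss (z : ℝ) : HasDerivAt logisticLoss (-sigmoid (-z)) z := by
  have h := ((hasDerivAt_neg' z).exp.const_add 1).log (by positivity)
  refine h.congr_deriv ?_
  rw [sigmoid_def, neg_neg, exp_neg]
  field_simp
  ring

lemma logisticLoss_nonneg (z : ℝ) : 0 ≤ logisticLoss z :=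
  log_nonneg (by linarith [exp_pos (-z)])

lemma logisticLoss_antitone : Antitone logisticLoss := fun _ _ hab =>
  log_le_log (by positivity) (by gcongr)

lemma logisticLoss_zero : logisticLoss 0 = log 2 := by
  norm_num [logisticLoss, one_add_one_eq_two]

lemma add_mul_sub_le_of_hasDerivAt_of_monotone {f f' : ℝ → ℝ}
    (hf : ∀ z, HasDerivAt f (f' z) z) (hf' : Monotone f') (a b : ℝ) :
    f a + f' a * (b - a) ≤ f b := by
  have hcont (s : Set ℝ) : ContinuousOn f s := fun z _ => (hf z).continuousAt.continuousWithinAt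
  rcases lt_trichotomy a b with hab | rfl | hab
  · obtain ⟨c, hc, hslope⟩ := exists_hasDerivAt_eq_slope f f' hab (hcont _) fun z _ => hf z
    rw [eq_div_iff (sub_ne_zero.2 hab.ne')] at hslope
    nlinarith [hf' hc.1.le]
  · simp
  · obtain ⟨c, hc, hslope⟩ := exists_hasDerivAt_eq_slope f f' hab (hcont _) fun z _ => hf z
    rw [eq_div_iff (sub_ne_zero.2 hab.ne')] at hslope
    nlinarith [hf' hc.2.le]

lemma logisticLoss_sub_mul_le (a b : ℝ) :
    logisticLoss a - sigmoid (-a) * (b - a) ≤ logisticLoss b := by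
  have h := add_mul_sub_le_of_hasDerivAt_of_monotone hasDerivAt_logisticLoss
    (fun _ _ hst => neg_le_neg (sigmoid_monotone (neg_le_neg hst))) a b
  linarith

-- The derivative of `z ↦ z² / 8 - logisticLoss z`, whose convexity is the `1/4`-smoothness of `ℓ`.
lemma monotone_div_four_add_sigmoid_neg : Monotone fun z => z / 4 + sigmoid (-z) := by
  have hderiv (z : ℝ) : HasDerivAt (fun z => z / 4 + sigmoid (-z))
      (1 / 4 - sigmoid (-z) * (1 - sigmoid (-z))) z := by
    have h : HasDerivAt (fun z => sigmoid (-z)) _ z :=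
      (hasDerivAt_sigmoid (-z)).comp z (hasDerivAt_neg z)
    exact (((hasDerivAt_id' z).div_const 4).add h).congr_deriv (by ring)
  refine monotone_of_deriv_nonneg (fun z => (hderiv z).differentiableAt) fun z => ?_
  rw [(hderiv z).deriv]
  nlinarith [sq_nonneg (sigmoid (-z) - 1 / 2)]

lemma logisticLoss_le_sub_mul_add_sq (a b : ℝ) :
    logisticLoss b ≤ logisticLoss a - sigmoid (-a) * (b - a) + (b - a) ^ 2 / 8 := by
  have hderiv (z : ℝ) :
      HasDerivAt (fun z => z ^ 2 / 8 - logisticLoss z) (z / 4 + sigmoid (-z)) z :=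
    (((hasDerivAt_pow 2 z).div_const 8).sub (hasDerivAt_logisticLoss z)).congr_deriv (by ring)
  have h := add_mul_sub_le_of_hasDerivAt_of_monotone hderiv monotone_div_four_add_sigmoid_neg a b
  nlinarith [h]

lemma one_div_mul_sum_le {m : ℕ} {f : Fin m → ℝ} {b : ℝ} (hb : 0 ≤ b) (h : ∀ i, f i ≤ b) :
    (1 / m : ℝ) * ∑ i, f i ≤ b := by
  rcases Nat.eq_zero_or_pos m with rfl | hm
  · simpa using hb
  calc (1 / m : ℝ) * ∑ i, f i ≤ (1 / m : ℝ) * ∑ _i : Fin m, b := by gcongr with i; exact h i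
    _ = b := by simp [field]

section Risk

variable {E : Type*} [NormedAddCommGroup E] [InnerProductSpace ℝ E] {m : ℕ} (x : Fin m → E)

noncomputable def logisticRisk (v : E) : ℝ := (1 / m) * ∑ i, logisticLoss ⟪x i, v⟫

noncomputable def logisticRiskGrad (v : E) : E :=
  (1 / m : ℝ) • ∑ i, (-sigmoid (-⟪x i, v⟫)) • x i

lemma inner_logisticRiskGrad (v h : E) :
    ⟪logisticRiskGrad x v, h⟫ = (1 / m) * ∑ i, -sigmoid (-⟪x i, v⟫) * ⟪x i, h⟫ := by
  simp only [logisticRiskGrad, real_inner_smul_left, sum_inner]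

lemma hasGradientAt_logisticRisk [CompleteSpace E] (v : E) :
    HasGradientAt (logisticRisk x) (logisticRiskGrad x v) v := by
  have hsum := HasFDerivAt.sum fun i (_ : i ∈ univ) =>
    (hasDerivAt_logisticLoss ⟪x i, v⟫).comp_hasFDerivAt v (innerSL ℝ (x i)).hasFDerivAt
  rw [hasGradientAt_iff_hasFDerivAt]
  refine ((hsum.const_mul (1 / m : ℝ)).congr_fderiv ?_).congr_of_eventuallyEq ?_
  · ext h
    simp [inner_logisticRiskGrad]
  · exact Filter.Eventually.of_forall fun u => by simp [logisticRisk]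

lemma logisticRisk_add_inner_le (v u : E) :
    logisticRisk x v + ⟪logisticRiskGrad x v, u - v⟫ ≤ logisticRisk x u := by
  have h : ∑ i, (logisticLoss ⟪x i, v⟫ - sigmoid (-⟪x i, v⟫) * (⟪x i, u⟫ - ⟪x i, v⟫))
      ≤ ∑ i, logisticLoss ⟪x i, u⟫ :=
    sum_le_sum fun i _ => logisticLoss_sub_mul_le _ _
  have h' := mul_le_mul_of_nonneg_left h (by positivity : (0 : ℝ) ≤ 1 / m)
  simp only [logisticRisk, inner_logisticRiskGrad, inner_sub_right, mul_sub, sum_sub_distrib,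
    neg_mul, sum_neg_distrib] at h' ⊢
  linarith

lemma logisticRisk_add_le (hx : ∀ i, ‖x i‖ ≤ 1) (v h : E) :
    logisticRisk x (v + h) ≤ logisticRisk x v + ⟪logisticRiskGrad x v, h⟫ + ‖h‖ ^ 2 / 8 := by
  have hterm (i : Fin m) : logisticLoss ⟪x i, v + h⟫ - logisticLoss ⟪x i, v⟫
      + sigmoid (-⟪x i, v⟫) * ⟪x i, h⟫ ≤ ‖h‖ ^ 2 / 8 := by
    have hsq : ⟪x i, h⟫ ^ 2 ≤ ‖h‖ ^ 2 := by
      refine sq_le_sq' ?_ ?_ <;>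
        nlinarith [abs_le.1 (abs_real_inner_le_norm (x i) h), hx i, norm_nonneg h]
    have := logisticLoss_le_sub_mul_add_sq ⟪x i, v⟫ ⟪x i, v + h⟫
    rw [inner_add_right] at this ⊢
    linarith
  have h' := one_div_mul_sum_le (by positivity) hterm
  simp only [logisticRisk, inner_logisticRiskGrad, mul_add, mul_sub, sum_add_distrib,
    sum_sub_distrib, neg_mul, sum_neg_distrib] at h' ⊢
  linarith

lemma logisticRisk_sub_grad_le (hx : ∀ i, ‖x i‖ ≤ 1) (v : E) :
    logisticRisk x (v - logisticRiskGrad x v)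
      ≤ logisticRisk x v - ‖logisticRiskGrad x v‖ ^ 2 / 2 := by
  have h := logisticRisk_add_le x hx v (-logisticRiskGrad x v)
  rw [← sub_eq_add_neg, inner_neg_right, real_inner_self_eq_norm_sq, norm_neg] at h
  nlinarith [sq_nonneg ‖logisticRiskGrad x v‖]

lemma logisticRisk_le_of_forall_le {v : E} {b : ℝ} (hb : 0 ≤ b)
    (h : ∀ i, logisticLoss ⟪x i, v⟫ ≤ b) : logisticRisk x v ≤ b :=
  one_div_mul_sum_le hb h

end Risk

section GradientDescent

variable {E : Type*} [NormedAddCommGroup E] [InnerProductSpace ℝ E] {f : E → ℝ} {g : E → E}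

lemma gradient_step_le (hconv : ∀ v u, f v + ⟪g v, u - v⟫ ≤ f u)
    (hdesc : ∀ v, f (v - g v) ≤ f v - ‖g v‖ ^ 2 / 2) (v u : E) :
    f (v - g v) + ‖v - g v - u‖ ^ 2 / 2 ≤ f u + ‖v - u‖ ^ 2 / 2 := by
  have hnorm : ‖v - g v - u‖ ^ 2 = ‖v - u‖ ^ 2 - 2 * ⟪v - u, g v⟫ + ‖g v‖ ^ 2 := by
    rw [sub_right_comm, norm_sub_sq_real]
  have hinner : ⟪g v, u - v⟫ = -⟪v - u, g v⟫ := by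
    rw [real_inner_comm, ← inner_neg_left, neg_sub]
  linarith [hconv v u, hdesc v]

lemma gradient_descent_le (hconv : ∀ v u, f v + ⟪g v, u - v⟫ ≤ f u)
    (hdesc : ∀ v, f (v - g v) ≤ f v - ‖g v‖ ^ 2 / 2) {w : ℕ → E}
    (hw : ∀ t, w (t + 1) = w t - g (w t)) (u : E) (n : ℕ) :
    n * f (w n) + ‖w n - u‖ ^ 2 / 2 ≤ n * f u + ‖w 0 - u‖ ^ 2 / 2 := by
  induction n with
  | zero => simp
  | succ n ih =>
    have hstep := gradient_step_le hconv hdesc (w n) u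
    have hmono : f (w (n + 1)) ≤ f (w n) := by
      rw [hw]; linarith [hdesc (w n), sq_nonneg ‖g (w n)‖]
    rw [← hw] at hstep
    push_cast
    nlinarith [mul_le_mul_of_nonneg_left hmono (Nat.cast_nonneg n : (0 : ℝ) ≤ n)]

lemma gradient_descent_sub_le (hconv : ∀ v u, f v + ⟪g v, u - v⟫ ≤ f u)
    (hdesc : ∀ v, f (v - g v) ≤ f v - ‖g v‖ ^ 2 / 2) {w : ℕ → E}
    (hw : ∀ t, w (t + 1) = w t - g (w t)) (u : E) {n : ℕ} (hn : 0 < n) :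
    f (w n) ≤ f u + ‖w 0 - u‖ ^ 2 / (2 * n) := by
  have h := gradient_descent_le hconv hdesc hw u n
  have hn' : (0 : ℝ) < n := by exact_mod_cast hn
  rw [← sub_le_iff_le_add', le_div_iff₀ (by positivity)]
  nlinarith [sq_nonneg ‖w n - u‖]

end GradientDescent

lemma logisticLoss_le_of_taylor {r b : ℝ} (hr : 0 ≤ r) (hb : 0 ≤ b) {n k : ℕ}
    (h : 1 ≤ (∑ i ∈ range n, r ^ i / i.factorial) * (∑ i ∈ range k, b ^ i / i.factorial - 1)) :
    logisticLoss r ≤ b := by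
  set p := ∑ i ∈ range n, r ^ i / i.factorial
  have hp : 0 < p := by
    by_contra! hp
    have hp0 : p = 0 := le_antisymm hp (sum_nonneg fun i _ => by positivity)
    rw [hp0, zero_mul] at h
    linarith
  have hexp : exp (-r) ≤ exp b - 1 := calc
    exp (-r) ≤ p⁻¹ := by rw [exp_neg]; exact inv_anti₀ hp (sum_le_exp_of_nonneg hr n)
    _ ≤ ∑ i ∈ range k, b ^ i / i.factorial - 1 := by
      rw [inv_le_iff_one_le_mul₀ hp, mul_comm]; exact h
    _ ≤ exp b - 1 := by linarith [sum_le_exp_of_nonneg hb k]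
  rw [logisticLoss, log_le_iff_le_exp (by positivity)]
  linarith

-- Used with `s = log R / R`; it already fails for `R = 7`, whence the numerical cases `T ≤ 7`.
lemma one_add_add_sq_div_le {R s : ℝ} (hR : 8 ≤ R) (hl : 2 ≤ R * s) :
    (1 + s + s ^ 2) / R ≤ 1 / R + 1 / (2 * R ^ 2) + s ^ 2 / 2 := by
  have hR0 : 0 < R := by linarith
  have hkey : 2 * R * s ^ 2 ≤ (R * s - 1) ^ 2 := by
    have h4 : (R * s) ^ 2 ≤ 4 * (R * s - 1) ^ 2 := by nlinarith
    refine le_of_mul_le_mul_left ?_ hR0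
    nlinarith [mul_le_mul_of_nonneg_right hR (sq_nonneg (R * s - 1))]
  have hdiff : 1 / R + 1 / (2 * R ^ 2) + s ^ 2 / 2 - (1 + s + s ^ 2) / R
      = ((R * s - 1) ^ 2 - 2 * R * s ^ 2) / (2 * R ^ 2) := by
    field_simp
    ring
  have : 0 ≤ ((R * s - 1) ^ 2 - 2 * R * s ^ 2) / (2 * R ^ 2) :=
    div_nonneg (by linarith) (by positivity)
  linarith

lemma logisticLoss_log_mul_le {R : ℝ} (hR : 8 ≤ R) :
    logisticLoss (log R * (R - 1) / R) ≤ 1 / R + log R ^ 2 / (2 * R ^ 2) := by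
  have hR0 : 0 < R := by linarith
  have hl : 2 ≤ log R := by
    rw [le_log_iff_exp_le hR0]
    calc exp 2 = exp 1 ^ 2 := by rw [← exp_nat_mul]; norm_num
      _ ≤ 2.7182818286 ^ 2 := by gcongr; exact exp_one_lt_d9.le
      _ ≤ R := by linarith
  have hs1 : log R / R ≤ 1 :=
    div_le_one_of_le₀ ((log_le_sub_one_of_pos hR0).trans (by linarith)) hR0.le
  have hexpR : exp (log R) = R := exp_log hR0
  obtain ⟨s, hs⟩ : ∃ s, log R = R * s := ⟨log R / R, by field_simp⟩
  rw [hs] at hl hs1 hexpR ⊢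
  rw [mul_div_cancel_left₀ _ hR0.ne'] at hs1
  have hs0 : 0 ≤ s := by nlinarith
  have hexp : exp s ≤ 1 + s + s ^ 2 := by
    have := abs_exp_sub_one_sub_id_le (x := s) (by rwa [abs_of_nonneg hs0])
    linarith [le_abs_self (exp s - 1 - s)]
  rw [logisticLoss, show -(R * s * (R - 1) / R) = s - R * s by field_simp; ring, exp_sub, hexpR,
    log_le_iff_le_exp (by positivity), exp_add,
    show (R * s) ^ 2 / (2 * R ^ 2) = s ^ 2 / 2 by field_simp]
  calc 1 + exp s / R ≤ 1 + 1 / R + 1 / (2 * R ^ 2) + s ^ 2 / 2 := by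
        linarith [div_le_div_of_nonneg_right hexp hR0.le, one_add_add_sq_div_le hR hl]
    _ ≤ (1 + 1 / R + (1 / R) ^ 2 / 2) * (1 + s ^ 2 / 2) := by
        rw [div_pow, one_pow, div_div, mul_comm (R ^ 2)]
        have : 0 ≤ 1 / R + 1 / (2 * R ^ 2) := by positivity
        nlinarith [mul_nonneg this (sq_nonneg s)]
    _ ≤ exp (1 / R) * exp (s ^ 2 / 2) := by
        gcongr
        · exact quadratic_le_exp_of_nonneg (by positivity)
        · linarith [add_one_le_exp (s ^ 2 / 2)]

-- For `r = q (T - 1) / T` the `γ`-dependent terms add up to `q² / (2γ²T)`, so only the case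
-- `γ = 1` remains, and it is `hloss`.
lemma exists_comparator_radius_of_le_log {T q : ℝ} (hT : 1 < T) (hq0 : 0 ≤ q) (hq : q ≤ log T)
    (hloss : logisticLoss (q * (T - 1) / T) ≤ 1 / T + q ^ 2 / (2 * T ^ 2)) :
    ∃ r, 0 ≤ r ∧ ∀ γ ∈ Set.Ioc (0 : ℝ) 1,
      logisticLoss r + (r / γ) ^ 2 / (2 * (T - 1)) ≤ 1 / T + log T ^ 2 / (2 * γ ^ 2 * T) := by
  have hT0 : 0 < T := by linarith
  refine ⟨q * (T - 1) / T, div_nonneg (mul_nonneg hq0 (by linarith)) hT0.le,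
    fun γ ⟨hγ0, hγ1⟩ => ?_⟩
  have hγ2 : γ ^ 2 ≤ 1 := pow_le_one₀ hγ0.le hγ1
  have hq2 : q ^ 2 ≤ log T ^ 2 := pow_le_pow_left₀ hq0 hq 2
  have hsplit : (q * (T - 1) / T / γ) ^ 2 / (2 * (T - 1)) + q ^ 2 / (2 * γ ^ 2 * T ^ 2)
      = q ^ 2 / (2 * γ ^ 2 * T) := by
    field_simp [(by linarith : T - 1 ≠ 0)]
    ring
  have hγq : q ^ 2 / (2 * T ^ 2) ≤ q ^ 2 / (2 * γ ^ 2 * T ^ 2) := by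
    gcongr
    nlinarith
  have hqT : q ^ 2 / (2 * γ ^ 2 * T) ≤ log T ^ 2 / (2 * γ ^ 2 * T) := by gcongr
  linarith

lemma exists_comparator_radius (T : ℕ) (hT : 2 ≤ T) :
    ∃ r, 0 ≤ r ∧ ∀ γ ∈ Set.Ioc (0 : ℝ) 1,
      logisticLoss r + (r / γ) ^ 2 / (2 * (T - 1)) ≤ 1 / T + log T ^ 2 / (2 * γ ^ 2 * T) := by
  obtain ⟨q, hq0, hq, hloss⟩ : ∃ q, 0 ≤ q ∧ q ≤ log T ∧
      logisticLoss (q * (T - 1) / T) ≤ 1 / T + q ^ 2 / (2 * T ^ 2) := by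
    rcases le_or_gt 8 T with hT8 | hT8
    · exact ⟨log T, log_nonneg (by norm_cast; omega), le_rfl,
        logisticLoss_log_mul_le (by exact_mod_cast hT8)⟩
    have hlog7 : (1.9 : ℝ) ≤ log 7 := by
      have : (19 : ℝ) ≤ 10 * log 7 := by
        rw [← Nat.cast_ofNat (R := ℝ) (n := 10), ← log_pow, le_log_iff_exp_le (by norm_num)]
        calc exp 19 = exp 1 ^ 19 := by rw [← exp_nat_mul]; norm_num
          _ ≤ 2.7182818286 ^ 19 := by gcongr; exact exp_one_lt_d9.le
          _ ≤ 7 ^ 10 := by norm_num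
      linarith
    have hlog4 : log (4 : ℝ) = 2 * log 2 := by
      rw [show (4 : ℝ) = 2 ^ 2 by norm_num, log_pow]; norm_num
    have hlog6 : log (6 : ℝ) = log 2 + log 3 := by
      rw [show (6 : ℝ) = 2 * 3 by norm_num, log_mul (by norm_num) (by norm_num)]
    have h2 := log_two_gt_d9
    have h3 := log_three_gt_d9
    have h5 := log_five_gt_d9
    interval_cases T <;> push_cast <;>
      [refine ⟨2 / 3, ?_⟩; refine ⟨1.08, ?_⟩; refine ⟨1.37, ?_⟩; refine ⟨1.6, ?_⟩;
        refine ⟨1.78, ?_⟩; refine ⟨1.9, ?_⟩] <;>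
      exact ⟨by norm_num, by linarith, logisticLoss_le_of_taylor (n := 8) (k := 5)
        (by norm_num) (by norm_num) (by norm_num [sum_range_succ, Nat.factorial])⟩
  exact exists_comparator_radius_of_le_log (by exact_mod_cast hT) hq0 hq hloss

theorem stmt_8_general {d m : ℕ}
    (x : Fin m → EuclideanSpace ℝ (Fin d)) (hx : ∀ i, ‖x i‖ ≤ 1)
    (γ : ℝ) (hγ : γ ∈ Set.Ioc (0 : ℝ) 1)
    (w₀ : EuclideanSpace ℝ (Fin d)) (hw₀ : ‖w₀‖ = 1)
    (hsep : ∀ i, γ ≤ ⟪x i, w₀⟫)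
    (L : EuclideanSpace ℝ (Fin d) → ℝ)
    (hL : ∀ v, L v = (1 / m) * ∑ i, Real.log (1 + Real.exp (-⟪x i, v⟫)))
    (w : ℕ → EuclideanSpace ℝ (Fin d)) (hw1 : w 1 = 0)
    (hrec : ∀ t, 1 ≤ t → w (t + 1) = w t - gradient L (w t)) :
    ∀ T : ℕ, 1 ≤ T →
      L (w T) ≤ 1 / T + (Real.log T) ^ 2 / (2 * γ ^ 2 * T) := by
  obtain rfl : L = logisticRisk x := funext hL
  intro T hT
  obtain rfl | hT2 := hT.eq_or_lt
  · have h0 : logisticRisk x 0 ≤ log 2 := logisticRisk_le_of_forall_le x (log_nonneg one_le_two)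
      fun i => by rw [inner_zero_right, logisticLoss_zero]
    rw [hw1]
    norm_num
    linarith [log_two_lt_d9]
  obtain ⟨r, hr0, hr⟩ := exists_comparator_radius T hT2
  have hγ0 : 0 < γ := hγ.1
  have hu : ‖(r / γ) • w₀‖ = r / γ := by
    rw [norm_smul, hw₀, mul_one, norm_of_nonneg (by positivity)]
  have hLu : logisticRisk x ((r / γ) • w₀) ≤ logisticLoss r :=
    logisticRisk_le_of_forall_le x (logisticLoss_nonneg r) fun i => logisticLoss_antitone <| by
      rw [real_inner_smul_right, div_mul_comm]
      exact le_mul_of_one_le_left hr0 ((one_le_div hγ0).2 (hsep i))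
  have hgd := gradient_descent_sub_le (logisticRisk_add_inner_le x) (logisticRisk_sub_grad_le x hx)
    (w := fun t => w (t + 1))
    (fun t => by rw [hrec (t + 1) (by omega), (hasGradientAt_logisticRisk x _).gradient])
    ((r / γ) • w₀) (n := T - 1) (by omega)
  simp only [Nat.sub_add_cancel hT, zero_add, hw1, zero_sub, norm_neg, hu, Nat.cast_sub hT,
    Nat.cast_one] at hgd
  linarith [hr γ hγ]

/-- Lemma 5 of the paper, from Ji–Telgarsky. For the logistic
loss `ℓ(z) = log(1 + exp(−z))`, gradient descent with step size `1` on the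
empirical risk of a dataset separable with margin `γ` satisfies
`L̂(w_T) ≤ 1/T + log²(T)/(2γ²T)` for every `T ≥ 1`. -/
theorem stmt_8 {d m : ℕ} (hm : 0 < m)
    (x : Fin m → EuclideanSpace ℝ (Fin d)) (hx : ∀ i, ‖x i‖ ≤ 1)
    (γ : ℝ) (hγ : γ ∈ Set.Ioc (0 : ℝ) 1)
    (w₀ : EuclideanSpace ℝ (Fin d)) (hw₀ : ‖w₀‖ = 1)
    (hsep : ∀ i, γ ≤ ⟪x i, w₀⟫)
    (L : EuclideanSpace ℝ (Fin d) → ℝ)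
    (hL : ∀ v, L v = (1 / m) * ∑ i, Real.log (1 + Real.exp (-⟪x i, v⟫)))
    (w : ℕ → EuclideanSpace ℝ (Fin d)) (hw1 : w 1 = 0)
    (hrec : ∀ t, 1 ≤ t → w (t + 1) = w t - gradient L (w t)) :
    ∀ T : ℕ, 1 ≤ T →
      L (w T) ≤ 1 / T + (Real.log T) ^ 2 / (2 * γ ^ 2 * T) :=
  stmt_8_general x hx γ hγ w₀ hw₀ hsep L hL w hw1 hrec
end

section
/- For any positive integers m, T and any γ ∈ (0, 1/8], there exists a dataset of m points x_1,…,x_m in ℝ² with max_i ‖x_i‖ ≤ 1 that is separable with margin γ (there is a unit vector w₀ with min_i x_iᵀw₀ ≥ γ), such that for any step size 0 < η ≤ 1, gradient descent on the logistic empirical risk, started at the origin (w_1 = 0, w_{t+1} = w_t − η∇L̂(w_t)), satisfies x_iᵀw_T ≤ 0 for at least ⌊m/(26·max{1, γ²T})⌋ of the data points x_i. -/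
/-!
Take `k = ⌊m / (26 max(1, γ²T))⌋` copies of `b = (γ, -√(1-γ²))` and `m - k` copies of
`a = (γ, √(1-γ²))`. Both have margin `γ` along `e₁`, while `⟪a, b⟫ = -c` with `c = 1 - 2γ²`
close to `1`. Gradient descent moves in the span of `a` and `b`, so it is governed by the
margins `p = ⟪b, w⟫` and `q = ⟪a, w⟫`. With `ε = ηk/m`, the majority pushes `q` up by at
least `ε` per step while `q ≤ 1`, and `q` can never fall below `1 - ε` afterwards. In the
combination `p + c q` the majority's contribution cancels, so it grows by at most `(1 - c²) ε`
per step. Since `1 - c² ≤ 4γ²` and `γ²Tε ≤ 1/26`, this growth cannot compensate `c q`, hence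
`p_T ≤ 0` on all `k` copies of `b`.
-/

open scoped RealInnerProductSpace
open Real

theorem Real.hasDerivAt_log_one_add_exp_neg (z : ℝ) :
    HasDerivAt (fun z => log (1 + exp (-z))) (-sigmoid (-z)) z := by
  convert (((hasDerivAt_neg z).exp).const_add 1).log (by positivity) using 1
  rw [sigmoid_def, neg_neg, exp_neg]
  field_simp
  ring

theorem hasGradientAt_logisticRisk_s14 {F ι : Type*} [NormedAddCommGroup F] [InnerProductSpace ℝ F]
    [CompleteSpace F] [Fintype ι] (x : ι → F) (r : ℝ) (w : F) :
    HasGradientAt (fun v => r * ∑ i, log (1 + exp (-⟪x i, v⟫)))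
      (-r • ∑ i, sigmoid (-⟪x i, w⟫) • x i) w := by
  have hterm (i : ι) : HasFDerivAt (fun v => log (1 + exp (-⟪x i, v⟫)))
      (-sigmoid (-⟪x i, w⟫) • innerSL ℝ (x i)) w :=
    (hasDerivAt_log_one_add_exp_neg _).comp_hasFDerivAt w (innerSL ℝ (x i)).hasFDerivAt
  rw [hasGradientAt_iff_hasFDerivAt]
  refine ((HasFDerivAt.fun_sum fun i _ => hterm i).const_mul r).congr_fderiv ?_
  ext y
  simp [Finset.mul_sum]

lemma one_fourth_le_sigmoid {z : ℝ} (hz : -1 ≤ z) : 1 / 4 ≤ sigmoid z :=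
  calc (1 / 4 : ℝ) ≤ sigmoid (-1) := by
        rw [sigmoid_def, neg_neg, one_div]
        gcongr
        linarith [exp_one_lt_three]
    _ ≤ sigmoid z := sigmoid_le hz

/-- The margins `p t = ⟪b, w t⟫` and `q t = ⟪a, w t⟫` of gradient descent with step `η` on the
logistic risk of `K` copies of `b` and `A` copies of `a`, where `‖a‖ = ‖b‖ = 1`,
`⟪a, b⟫ = -c` and `e = η / (K + A)`. -/
structure TwoPointLogisticDynamics (e K A c : ℝ) (p q : ℕ → ℝ) : Prop where
  p_one : p 1 = 0
  q_one : q 1 = 0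
  p_succ : ∀ t, 1 ≤ t → p (t + 1) = p t + e * (K * sigmoid (-p t) - c * (A * sigmoid (-q t)))
  q_succ : ∀ t, 1 ≤ t → q (t + 1) = q t + e * (A * sigmoid (-q t) - c * (K * sigmoid (-p t)))

namespace TwoPointLogisticDynamics

variable {e K A c : ℝ} {p q : ℕ → ℝ}

lemma add_mul_le (h : TwoPointLogisticDynamics e K A c p q) (he : 0 ≤ e) (hK : 0 ≤ K)
    (hc0 : 0 ≤ c) (hc1 : c ≤ 1) {t : ℕ} (ht : 1 ≤ t) :
    p t + c * q t ≤ e * K * (1 - c ^ 2) * (t - 1) := by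
  induction t, ht using Nat.le_induction with
  | base => simp [h.p_one, h.q_one]
  | succ t ht ih =>
    have hstep : p (t + 1) + c * q (t + 1) =
        p t + c * q t + e * K * (1 - c ^ 2) * sigmoid (-p t) := by
      rw [h.p_succ t ht, h.q_succ t ht]; ring
    have hrate : 0 ≤ e * K * (1 - c ^ 2) :=
      mul_nonneg (mul_nonneg he hK) (sub_nonneg.mpr (pow_le_one₀ hc0 hc1))
    have := mul_le_of_le_one_right hrate (sigmoid_le_one (-p t))
    push_cast
    linarith

lemma min_le_q (h : TwoPointLogisticDynamics e K A c p q) (he : 0 ≤ e) (hK : 0 ≤ K)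
    (hA : 8 * K ≤ A) (hc1 : c ≤ 1) {t : ℕ} (ht : 1 ≤ t) :
    min ((t - 1) * (e * K)) (1 - e * K) ≤ q t := by
  induction t, ht using Nat.le_induction with
  | base => simp [h.q_one]
  | succ t ht ih =>
    have hpull : c * (K * sigmoid (-p t)) ≤ K := by
      have h0 : 0 ≤ K * sigmoid (-p t) := mul_nonneg hK (sigmoid_nonneg _)
      have h1 : K * sigmoid (-p t) ≤ K := mul_le_of_le_one_right hK (sigmoid_le_one _)
      nlinarith
    have heK : 0 ≤ e * K := mul_nonneg he hK
    push_cast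
    rw [h.q_succ t ht, min_le_iff]
    by_cases hq : q t ≤ 1
    · have hpush : 2 * K ≤ A * sigmoid (-q t) := by
        have := one_fourth_le_sigmoid (neg_le_neg hq)
        nlinarith
      have hgain : e * K ≤ e * (A * sigmoid (-q t) - c * (K * sigmoid (-p t))) :=
        mul_le_mul_of_nonneg_left (by linarith) he
      rcases min_le_iff.mp ih with ih | ih
      · left; linarith
      · right; linarith
    · have hloss : -(e * K) ≤ e * (A * sigmoid (-q t) - c * (K * sigmoid (-p t))) := by
        have : 0 ≤ A * sigmoid (-q t) := mul_nonneg (by linarith) (sigmoid_nonneg _)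
        rw [← mul_neg]
        exact mul_le_mul_of_nonneg_left (by linarith) he
      right; linarith

lemma p_nonpos (h : TwoPointLogisticDynamics e K A c p q) (he : 0 ≤ e) (hK : 0 ≤ K)
    (hA : 8 * K ≤ A) (hc0 : 0 ≤ c) (hc1 : c ≤ 1) (hc : 1 ≤ c + c ^ 2) {T : ℕ} (hT : 1 ≤ T)
    (hbudget : (1 - c ^ 2) * (e * K) * (T - 1) ≤ c * (1 - e * K)) :
    p T ≤ 0 := by
  have hpot := h.add_mul_le he hK hc0 hc1 hT
  rcases min_le_iff.mp (h.min_le_q he hK hA hc1 hT) with hq | hq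
  · have hT1 : (0 : ℝ) ≤ T - 1 := by
      have : (1 : ℝ) ≤ T := by exact_mod_cast hT
      linarith
    have := mul_le_mul_of_nonneg_left hq hc0
    have : 0 ≤ (c + c ^ 2 - 1) * ((T - 1) * (e * K)) :=
      mul_nonneg (by linarith) (mul_nonneg hT1 (mul_nonneg he hK))
    nlinarith
  · have := mul_le_mul_of_nonneg_left hq hc0
    nlinarith

end TwoPointLogisticDynamics

lemma Fin.sum_ite_val_lt {M : Type*} [AddCommMonoid M] {m k : ℕ} (hk : k ≤ m) (u v : M) :
    ∑ i : Fin m, (if (i : ℕ) < k then u else v) = k • u + (m - k) • v := by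
  rw [Fin.sum_univ_eq_sum_range (fun i => if i < k then u else v), ← Nat.add_sub_cancel' hk,
    Finset.sum_range_add]
  simp [Finset.sum_ite_of_true]

def twoPointData {E : Type*} (m k : ℕ) (a b : E) : Fin m → E :=
  fun i => if (i : ℕ) < k then b else a

section TwoPointData

variable {E : Type*} [NormedAddCommGroup E] [InnerProductSpace ℝ E] [CompleteSpace E]

lemma gradient_twoPointData_risk {m k : ℕ} (hk : k ≤ m) (a b v : E) :
    gradient (fun v => (1 / m) * ∑ i, log (1 + exp (-⟪twoPointData m k a b i, v⟫))) v =
      -(1 / m : ℝ) • ((k : ℝ) • sigmoid (-⟪b, v⟫) • b +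
        ((m - k : ℕ) : ℝ) • sigmoid (-⟪a, v⟫) • a) := by
  rw [(hasGradientAt_logisticRisk_s14 _ _ v).gradient]
  congr 1
  simp only [twoPointData, apply_ite (fun y => sigmoid (-⟪y, v⟫) • y)]
  rw [Fin.sum_ite_val_lt hk, Nat.cast_smul_eq_nsmul, Nat.cast_smul_eq_nsmul]

lemma twoPointLogisticDynamics_of_gradientDescent {m k : ℕ} (hk : k ≤ m) {a b : E} {c : ℝ}
    (ha : ⟪a, a⟫ = 1) (hb : ⟪b, b⟫ = 1) (hab : ⟪a, b⟫ = -c) {η : ℝ} {L : E → ℝ}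
    (hL : ∀ v, L v = (1 / m) * ∑ i, log (1 + exp (-⟪twoPointData m k a b i, v⟫)))
    {w : ℕ → E} (hw1 : w 1 = 0) (hw : ∀ t, 1 ≤ t → w (t + 1) = w t - η • gradient L (w t)) :
    TwoPointLogisticDynamics (η / m) k (m - k : ℕ) c (fun t => ⟪b, w t⟫) (fun t => ⟪a, w t⟫) := by
  have hba : ⟪b, a⟫ = -c := by rw [real_inner_comm, hab]
  obtain rfl : L = _ := funext hL
  refine ⟨by simp [hw1], by simp [hw1], fun t ht => ?_, fun t ht => ?_⟩ <;>
  · simp only [hw t ht, gradient_twoPointData_risk hk, inner_sub_right, inner_smul_right,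
      inner_add_right, ha, hb, hab, hba]
    ring

end TwoPointData

lemma EuclideanSpace.exists_unit_pair_inner_eq {γ : ℝ} (hγ : γ ^ 2 ≤ 1) :
    ∃ a b w₀ : EuclideanSpace ℝ (Fin 2), ‖a‖ = 1 ∧ ‖b‖ = 1 ∧ ‖w₀‖ = 1 ∧
      ⟪a, b⟫ = -(1 - 2 * γ ^ 2) ∧ ⟪a, w₀⟫ = γ ∧ ⟪b, w₀⟫ = γ := by
  have hα : 0 ≤ 1 - γ ^ 2 := by linarith
  refine ⟨!₂[γ, √(1 - γ ^ 2)], !₂[γ, -√(1 - γ ^ 2)], !₂[1, 0], ?_, ?_, ?_, ?_, ?_, ?_⟩ <;>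
    simp [EuclideanSpace.norm_eq, PiLp.inner_apply, Fin.sum_univ_two, sq_sqrt hα, mul_self_sqrt hα]
  ring

lemma Nat.floor_div_mul_le_of_nonneg {x y : ℝ} (hx : 0 ≤ x) (hy : 0 < y) : ⌊x / y⌋₊ * y ≤ x :=
  (le_div_iff₀ hy).mp (Nat.floor_le (div_nonneg hx hy.le))

lemma div_mul_mul_le_inv_of_mul_le {m k : ℕ} {η s n : ℝ} (hη0 : 0 ≤ η) (hη1 : η ≤ 1)
    (hn : 0 < n) (hks : n * (k * s) ≤ m) : η / m * k * s ≤ n⁻¹ := by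
  rw [div_mul_eq_mul_div, div_mul_eq_mul_div]
  refine div_le_of_le_mul₀ (by positivity) (by positivity) ?_
  rw [← le_div_iff₀' hn, div_eq_inv_mul] at hks
  nlinarith [mul_nonneg (Nat.cast_nonneg (α := ℝ) m) (inv_nonneg.mpr hn.le)]

theorem stmt_14_general (m T : ℕ) (hT : 0 < T)
    (γ : ℝ) (hγ : γ ∈ Set.Ioc (0 : ℝ) (1 / 8)) :
    ∃ x : Fin m → EuclideanSpace ℝ (Fin 2),
      (∀ i, ‖x i‖ ≤ 1) ∧
      (∃ w₀ : EuclideanSpace ℝ (Fin 2), ‖w₀‖ = 1 ∧ ∀ i, γ ≤ ⟪x i, w₀⟫) ∧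
      ∀ η : ℝ, 0 < η → η ≤ 1 →
      ∀ L : EuclideanSpace ℝ (Fin 2) → ℝ,
        (∀ v, L v = (1 / m) * ∑ i, Real.log (1 + Real.exp (-⟪x i, v⟫))) →
      ∀ w : ℕ → EuclideanSpace ℝ (Fin 2), w 1 = 0 →
        (∀ t, 1 ≤ t → w (t + 1) = w t - η • gradient L (w t)) →
      ∃ S : Finset (Fin m),
        ⌊(m : ℝ) / (26 * max 1 (γ ^ 2 * T))⌋ ≤ (S.card : ℤ) ∧
        ∀ i ∈ S, ⟪x i, w T⟫ ≤ 0 := by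
  obtain ⟨hγ0, hγ8⟩ := hγ
  obtain ⟨a, b, w₀, ha, hb, hw₀, hab, haw, hbw⟩ :=
    EuclideanSpace.exists_unit_pair_inner_eq (γ := γ) (by nlinarith)
  set k := ⌊(m : ℝ) / (26 * max 1 (γ ^ 2 * T))⌋₊
  have hkD := Nat.floor_div_mul_le_of_nonneg (Nat.cast_nonneg m)
    (by positivity : (0 : ℝ) < 26 * max 1 (γ ^ 2 * T))
  have hk : 26 * (k * 1) ≤ (m : ℝ) := by nlinarith [le_max_left 1 (γ ^ 2 * T)]
  have hkT : 26 * (k * (γ ^ 2 * T)) ≤ (m : ℝ) := by nlinarith [le_max_right 1 (γ ^ 2 * T)]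
  have hkm : k ≤ m := by exact_mod_cast (by linarith : (k : ℝ) ≤ m)
  refine ⟨twoPointData m k a b, fun i => ?_, ⟨w₀, hw₀, fun i => ?_⟩, ?_⟩
  · unfold twoPointData; split_ifs <;> simp [ha, hb]
  · unfold twoPointData; split_ifs <;> simp [haw, hbw]
  intro η hη0 hη1 L hL w hw1 hw
  refine ⟨({i | (i : ℕ) < k} : Finset (Fin m)), ?_, fun i hi => ?_⟩
  · rw [Fin.card_filter_val_lt, min_eq_right hkm, Int.natCast_floor_eq_floor (by positivity)]
  have hε := div_mul_mul_le_inv_of_mul_le hη0.le hη1 (by norm_num) hk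
  have hεT := div_mul_mul_le_inv_of_mul_le hη0.le hη1 (by norm_num) hkT
  have hT1 : (1 : ℝ) ≤ T := by exact_mod_cast hT
  have hbudget : (1 - (1 - 2 * γ ^ 2) ^ 2) * (η / m * k) * (T - 1) ≤
      (1 - 2 * γ ^ 2) * (1 - η / m * k) := by
    have hε0 : 0 ≤ η / m * k := by positivity
    nlinarith [mul_nonneg hε0 (sq_nonneg (γ ^ 2)), mul_nonneg hε0 (sq_nonneg γ)]
  simp only [Finset.mem_filter, Finset.mem_univ, true_and] at hi
  simp only [twoPointData, if_pos hi]
  exact (twoPointLogisticDynamics_of_gradientDescent hkm (by simp [ha]) (by simp [hb]) hab hL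
    hw1 hw).p_nonpos (by positivity) (by positivity) (by push_cast [Nat.cast_sub hkm]; linarith)
    (by nlinarith) (by nlinarith) (by nlinarith) (by omega) hbudget

/-- Theorem 8 of the paper: tightness. For any positive
integers `m, T` and any `γ ∈ (0, 1/8]`, there exists a dataset of `m` points in
`ℝ²`, contained in the unit ball and separable with margin `γ`, such that for
any step size `0 < η ≤ 1`, gradient descent on the logistic empirical risk
started at the origin satisfies `xᵢᵀw_T ≤ 0` for at least
`⌊m/(26·max{1, γ²T})⌋` of the data points. -/
theorem stmt_14 (m T : ℕ) (hm : 0 < m) (hT : 0 < T)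
    (γ : ℝ) (hγ : γ ∈ Set.Ioc (0 : ℝ) (1 / 8)) :
    ∃ x : Fin m → EuclideanSpace ℝ (Fin 2),
      (∀ i, ‖x i‖ ≤ 1) ∧
      (∃ w₀ : EuclideanSpace ℝ (Fin 2), ‖w₀‖ = 1 ∧ ∀ i, γ ≤ ⟪x i, w₀⟫) ∧
      ∀ η : ℝ, 0 < η → η ≤ 1 →
      ∀ L : EuclideanSpace ℝ (Fin 2) → ℝ,
        (∀ v, L v = (1 / m) * ∑ i, Real.log (1 + Real.exp (-⟪x i, v⟫))) →
      ∀ w : ℕ → EuclideanSpace ℝ (Fin 2), w 1 = 0 →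
        (∀ t, 1 ≤ t → w (t + 1) = w t - η • gradient L (w t)) →
      ∃ S : Finset (Fin m),
        ⌊(m : ℝ) / (26 * max 1 (γ ^ 2 * T))⌋ ≤ (S.card : ℤ) ∧
        ∀ i ∈ S, ⟪x i, w T⟫ ≤ 0 :=
  stmt_14_general m T hT γ hγ
end

section
/- Fix ε, γ ∈ (0, 1/8] and a step size 0 < η ≤ 1, and consider gradient descent on the bivariate function L̂(r,s) := (1−ε)·ℓ(r) + ε·ℓ(−r/2 + 3γs), where ℓ is the logistic loss, starting from (r_1, s_1) = (0,0). Then there exists an iteration index T ≤ 32/(5η) + 1 such that: (1) r_t ≥ 15/16 for all t ≥ T; (2) s_T ≤ 3/10; (3) −r_t/2 + 3γs_t ≤ 0 for all t ≤ T. -/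
set_option maxHeartbeats 2000000 in
/-- Lemma 8 of the paper. Fix `ε, γ ∈ (0, 1/8]` and a step
size `0 < η ≤ 1`, and consider gradient descent on the bivariate function
`L̂(r,s) = (1−ε)ℓ(r) + εℓ(−r/2 + 3γs)` with `ℓ` the logistic loss, starting
from `(r₁, s₁) = (0,0)`. Then there exists an iteration index `T ≤ 32/(5η) + 1`
such that (1) `r_t ≥ 15/16` for all `t ≥ T`; (2) `s_T ≤ 3/10`;
(3) `−r_t/2 + 3γ s_t ≤ 0` for all `t ≤ T`. -/
theorem stmt_16 (ε γ : ℝ) (hε : ε ∈ Set.Ioc (0 : ℝ) (1 / 8))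
    (hγ : γ ∈ Set.Ioc (0 : ℝ) (1 / 8))
    (η : ℝ) (hη0 : 0 < η) (hη1 : η ≤ 1)
    (ℓ ℓ' : ℝ → ℝ)
    (hℓ : ∀ z, ℓ z = Real.log (1 + Real.exp (-z)))
    (hderiv : ∀ z, HasDerivAt ℓ (ℓ' z) z)
    (r s : ℕ → ℝ) (hr1 : r 1 = 0) (hs1 : s 1 = 0)
    (hrrec : ∀ t, 1 ≤ t →
      r (t + 1) = r t - (1 - ε) * η * ℓ' (r t)
        + (ε * η / 2) * ℓ' (-(r t) / 2 + 3 * γ * s t))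
    (hsrec : ∀ t, 1 ≤ t →
      s (t + 1) = s t - 3 * γ * ε * η * ℓ' (-(r t) / 2 + 3 * γ * s t)) :
    ∃ T : ℕ, 1 ≤ T ∧ (T : ℝ) ≤ 32 / (5 * η) + 1 ∧
      (∀ t, T ≤ t → 15 / 16 ≤ r t) ∧
      s T ≤ 3 / 10 ∧
      (∀ t, 1 ≤ t → t ≤ T → -(r t) / 2 + 3 * γ * s t ≤ 0) := by
  obtain ⟨hε0, hε1⟩ := hε
  obtain ⟨hγ0, hγ1⟩ := hγ
  -- derivative formula
  have hℓ'eq : ∀ z, ℓ' z = -(1 + Real.exp z)⁻¹ := by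
    intro z
    have h2 : HasDerivAt (fun z : ℝ => 1 + Real.exp (-z)) (-Real.exp (-z)) z := by
      have := (Real.hasDerivAt_exp (-z)).comp z ((hasDerivAt_id z).neg)
      simpa using this.const_add 1
    have h1 : HasDerivAt (fun z => Real.log (1 + Real.exp (-z)))
        (-Real.exp (-z) / (1 + Real.exp (-z))) z := h2.log (by positivity)
    have h3 : HasDerivAt ℓ (-Real.exp (-z) / (1 + Real.exp (-z))) z := by
      have he : ℓ = fun z => Real.log (1 + Real.exp (-z)) := funext hℓ
      rw [he]; exact h1
    have h4 := (hderiv z).unique h3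
    rw [h4, Real.exp_neg]
    have hp := Real.exp_pos z
    field_simp
    ring
  -- bounds on ℓ'
  have hbnd : ∀ z, -1 < ℓ' z ∧ ℓ' z < 0 := by
    intro z
    rw [hℓ'eq z]
    have hp := Real.exp_pos z
    have h1 : 0 < (1 + Real.exp z)⁻¹ := by positivity
    have h2 : (1 + Real.exp z) * (1 + Real.exp z)⁻¹ = 1 := mul_inv_cancel₀ (by positivity)
    constructor <;> nlinarith
  have hb14 : ∀ z, z ≤ 1 → ℓ' z ≤ -(1/4) := by
    intro z hz
    rw [hℓ'eq z]
    have hp := Real.exp_pos z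
    have h1 : 0 < (1 + Real.exp z)⁻¹ := by positivity
    have h2 : (1 + Real.exp z) * (1 + Real.exp z)⁻¹ = 1 := mul_inv_cancel₀ (by positivity)
    have h3 : Real.exp z ≤ Real.exp 1 := Real.exp_le_exp.mpr hz
    have h4 := Real.exp_one_lt_d9
    nlinarith
  have hb725 : ∀ z, z ≤ 15/16 → ℓ' z ≤ -(7/25) := by
    intro z hz
    rw [hℓ'eq z]
    have hp := Real.exp_pos z
    have h1 : 0 < (1 + Real.exp z)⁻¹ := by positivity
    have h2 : (1 + Real.exp z) * (1 + Real.exp z)⁻¹ = 1 := mul_inv_cancel₀ (by positivity)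
    have h3 : Real.exp z ≤ Real.exp (15/16) := Real.exp_le_exp.mpr hz
    have h5 : Real.exp (15/16) ≤ 18/7 := by
      have e1 : Real.exp (15/16) * Real.exp (1/16) = Real.exp 1 := by
        rw [← Real.exp_add]; norm_num
      have e2 : (17:ℝ)/16 ≤ Real.exp (1/16) := by
        have := Real.add_one_le_exp (1/16 : ℝ)
        linarith
      have e3 := Real.exp_one_lt_d9
      have e4 := (Real.exp_pos (15/16 : ℝ)).le
      nlinarith
    nlinarith
  -- step lemmas
  have S1 : ∀ t, 1 ≤ t → r t ≤ 15/16 → r t + 73 * η / 400 ≤ r (t + 1) := by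
    intro t ht hrt
    rw [hrrec t ht]
    have ha := hb725 (r t) hrt
    have hb := hbnd (-(r t) / 2 + 3 * γ * s t)
    nlinarith [hb.1, hb.2, mul_pos hε0 hη0,
      mul_le_mul_of_nonneg_left ha (by nlinarith : (0:ℝ) ≤ (1 - ε) * η),
      mul_le_mul_of_nonneg_left hb.1.le (by positivity : (0:ℝ) ≤ ε * η / 2)]
  have S1a : ∀ t, 1 ≤ t → r t ≤ 1 → r t ≤ r (t + 1) := by
    intro t ht hrt
    rw [hrrec t ht]
    have ha := hb14 (r t) hrt
    have hb := hbnd (-(r t) / 2 + 3 * γ * s t)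
    nlinarith [hb.1, hb.2, mul_pos hε0 hη0,
      mul_le_mul_of_nonneg_left ha (by nlinarith : (0:ℝ) ≤ (1 - ε) * η),
      mul_le_mul_of_nonneg_left hb.1.le (by positivity : (0:ℝ) ≤ ε * η / 2)]
  have S2 : ∀ t, 1 ≤ t → r t - η / 16 ≤ r (t + 1) := by
    intro t ht
    rw [hrrec t ht]
    have ha := hbnd (r t)
    have hb := hbnd (-(r t) / 2 + 3 * γ * s t)
    nlinarith [ha.2, hb.1, hb.2,
      mul_le_mul_of_nonneg_left ha.2.le (by nlinarith : (0:ℝ) ≤ (1 - ε) * η),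
      mul_le_mul_of_nonneg_left hb.1.le (by positivity : (0:ℝ) ≤ ε * η / 2)]
  have S3 : ∀ t, 1 ≤ t → s t ≤ s (t + 1) ∧ s (t + 1) ≤ s t + 3 * γ * ε * η := by
    intro t ht
    rw [hsrec t ht]
    have hb := hbnd (-(r t) / 2 + 3 * γ * s t)
    have hc : 0 < 3 * γ * ε * η := by positivity
    constructor
    · nlinarith [hb.2]
    · nlinarith [hb.1]
  -- growth lemma
  have G : ∀ n, 1 ≤ n → (∀ t, 1 ≤ t → t < n → r t < 15/16) →
      ((n : ℝ) - 1) * (73 * η / 400) ≤ r n := by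
    intro n
    induction n with
    | zero => omega
    | succ m ih =>
      intro _ hall
      rcases Nat.eq_or_lt_of_le (Nat.one_le_iff_ne_zero.mpr (by omega) : 1 ≤ m + 1) with h | h
      · rw [← h, hr1]; norm_num
      · have hm1 : 1 ≤ m := by omega
        have hprev := ih hm1 (fun t ht htm => hall t ht (by omega))
        have hrm : r m < 15/16 := hall m hm1 (by omega)
        have := S1 m hm1 hrm.le
        push_cast
        linarith
  -- s upper bound lemma
  have Sup : ∀ n, 1 ≤ n → s n ≤ ((n : ℝ) - 1) * (3 / 64 * η) := by
    intro n
    induction n with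
    | zero => omega
    | succ m ih =>
      intro _
      rcases Nat.eq_or_lt_of_le (Nat.one_le_iff_ne_zero.mpr (by omega) : 1 ≤ m + 1) with h | h
      · rw [← h, hs1]; norm_num
      · have hm1 : 1 ≤ m := by omega
        have hprev := ih hm1
        have h2 := (S3 m hm1).2
        have hge : γ * ε ≤ 1 / 64 := by nlinarith
        have h3 : 3 * γ * ε * η ≤ 3 / 64 * η := by
          nlinarith [mul_le_mul_of_nonneg_right hge hη0.le]
        push_cast
        linarith
  -- existence of crossing time
  have hex : ∃ t, 1 ≤ t ∧ 15/16 ≤ r t := by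
    by_contra hc
    push_neg at hc
    obtain ⟨m, hm⟩ := exists_nat_ge ((375 : ℝ) / (73 * η))
    have hn1 : 1 ≤ m + 1 := by omega
    have hall : ∀ t, 1 ≤ t → t < m + 1 → r t < 15/16 := fun t ht _ => hc t ht
    have hG := G (m + 1) hn1 hall
    have hcast : (((m + 1 : ℕ)) : ℝ) - 1 = (m : ℝ) := by push_cast; ring
    rw [hcast] at hG
    have h73 : (0:ℝ) < 73 * η := by positivity
    have hstep : (375 : ℝ) / (73 * η) * (73 * η / 400) ≤ (m : ℝ) * (73 * η / 400) := by
      have h400 : (0:ℝ) ≤ 73 * η / 400 := by positivity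
      exact mul_le_mul_of_nonneg_right hm h400
    have heq : (375 : ℝ) / (73 * η) * (73 * η / 400) = 15/16 := by
      field_simp
      norm_num
    have : (15:ℝ)/16 ≤ r (m + 1) := by linarith
    exact absurd this (not_le.mpr (hc (m + 1) hn1))
  classical
  obtain ⟨T, hTdef⟩ : ∃ T, T = Nat.find hex := ⟨_, rfl⟩
  obtain ⟨hT1, hTr⟩ : 1 ≤ T ∧ 15/16 ≤ r T := hTdef ▸ Nat.find_spec hex
  have hmin : ∀ t, t < T → 1 ≤ t → r t < 15/16 := by
    intro t htT ht
    have := Nat.find_min hex (hTdef ▸ htT)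
    push_neg at this
    exact this ht
  have hT2 : 2 ≤ T := by
    by_contra h
    have hT1' : T = 1 := by omega
    rw [hT1', hr1] at hTr
    norm_num at hTr
  have hu : (1:ℝ) ≤ 1/η := by rw [le_div_iff₀ hη0]; linarith
  have hinv : (1/η) * η = 1 := by field_simp
  -- bound on T
  have hTbound : (T : ℝ) ≤ 375/73 * (1/η) + 2 := by
    have hT11 : 1 ≤ T - 1 := by omega
    have hG := G (T - 1) hT11 (fun t ht htm => hmin t (by omega) ht)
    have hrT1 : r (T - 1) < 15/16 := hmin (T - 1) (by omega) hT11
    have hcast : ((T - 1 : ℕ) : ℝ) = (T : ℝ) - 1 := by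
      push_cast [Nat.cast_sub (by omega : 1 ≤ T)]; ring
    rw [hcast] at hG
    have h5 : ((T:ℝ) - 2) * (73 * η) ≤ 375 := by nlinarith
    nlinarith [mul_pos hη0 hη0, hη0.le]
  have hTfinal : (T : ℝ) ≤ 32 / (5 * η) + 1 := by
    have e2 : (32:ℝ) / (5 * η) = 32/5 * (1/η) := by ring
    rw [e2]
    linarith
  refine ⟨T, by omega, hTfinal, ?_, ?_, ?_⟩
  · -- r stays above 15/16
    intro t ht
    induction t, ht using Nat.le_induction with
    | base => exact hTr
    | succ m hm ih =>
      have hm1 : 1 ≤ m := by omega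
      rcases le_or_gt (r m) 1 with h | h
      · exact le_trans ih (S1a m hm1 h)
      · have := S2 m hm1
        linarith
  · -- s T ≤ 3/10
    have h1 := Sup T (by omega)
    have h4 : ((T:ℝ) - 1) * η ≤ 375/73 + η := by
      nlinarith [hinv, hη0.le]
    nlinarith [hη0.le, hinv]
  · -- invariant
    intro t ht htT
    induction t, ht using Nat.le_induction with
    | base => rw [hr1, hs1]; norm_num
    | succ m hm ih =>
      have hm1 : 1 ≤ m := by omega
      have hmT : m < T := by omega
      have ihm := ih (by omega)
      have hrm : r m < 15/16 := hmin m hmT hm1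
      have hstep := S1 m hm1 hrm.le
      have hs3 := (S3 m hm1).2
      have h3g : 3 * γ * (s (m + 1)) ≤ 3 * γ * (s m + 3 * γ * ε * η) := by
        have hg : (0:ℝ) ≤ 3 * γ := by positivity
        exact mul_le_mul_of_nonneg_left hs3 hg
      have hg2 : γ * γ * ε * η ≤ 1 / 512 * η := by
        have h1 : γ * γ ≤ 1 / 64 := by nlinarith
        have h2 : γ * γ * ε ≤ 1 / 512 := by nlinarith
        nlinarith
      nlinarith [hη0.le]
end
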